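/- arXiv:2303.07949 — 3 statements merged into one kernel-verified Lean document; each statement's English description precedes it below -/
import Mathlib

section
/- Let A be an n×n real symmetric matrix with set of distinct eigenvalues R, let R_0 ⊆ R, and let N be a set of |R_0| + 1 distinct real numbers that strictly interlaces R_0 (i.e., between any two consecutive elements of N lies exactly one element of R_0, and all elements of R_0 lie strictly between the extreme elements of N). Then there exists a 1-bordering A' of A (a symmetric (n+1)×(n+1) matrix containing A as trailing principal submatrix) such that m_{A'}(λ) = m_A(λ) − 1 for λ ∈ R_0, m_{A'}(λ) = m_A(λ) + 1 for λ ∈ N, and m_{A'}(λ) = m_A(λ) otherwise. -/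
open Matrix

/-- The multiplicity of `t` as an eigenvalue of the matrix `A`. -/
noncomputable def eigMult {n : ℕ} (A : Matrix (Fin n) (Fin n) ℝ) (t : ℝ) : ℕ :=
  Module.finrank ℝ (LinearMap.ker (Matrix.toLin' (A - t • (1 : Matrix (Fin n) (Fin n) ℝ))))

namespace Stmt7Aux

open Polynomial Finset





noncomputable def eig' {m : Type*} [Fintype m] [DecidableEq m] (M : Matrix m m ℝ) (t : ℝ) : ℕ :=
  Module.finrank ℝ (LinearMap.ker (Matrix.toLin' (M - t • (1 : Matrix m m ℝ))))

lemma eigMult_eq_eig' {n : ℕ} (A : Matrix (Fin n) (Fin n) ℝ) (t : ℝ) :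
    eigMult A t = eig' A t := rfl

lemma finrank_ker_of {V W W' : Type*} [AddCommGroup V] [Module ℝ V]
    [AddCommGroup W] [Module ℝ W] [AddCommGroup W'] [Module ℝ W']
    (g : W →ₗ[ℝ] W') (Φ : V →ₗ[ℝ] W) (hinj : Function.Injective Φ)
    (hr : LinearMap.range Φ = LinearMap.ker g) :
    Module.finrank ℝ (LinearMap.ker g) = Module.finrank ℝ V := by
  rw [← hr, LinearMap.finrank_range_of_inj hinj]

lemma eig'_conj {m : Type*} [Fintype m] [DecidableEq m] (M P Q : Matrix m m ℝ)
    (hPQ : P * Q = 1) (hQP : Q * P = 1) (t : ℝ) :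
    eig' (P * M * Q) t = eig' M t := by
  have h1 : P * M * Q - t • (1 : Matrix m m ℝ) = P * (M - t • 1) * Q := by
    conv_rhs => rw [Matrix.mul_sub, Matrix.sub_mul, mul_smul_comm, Matrix.mul_one, smul_mul_assoc, hPQ]
  unfold eig'
  rw [h1, Matrix.toLin'_mul, Matrix.toLin'_mul, LinearMap.comp_assoc]
  have hPinj : LinearMap.ker (Matrix.toLin' P) = ⊥ := by
    rw [LinearMap.ker_eq_bot]
    have : Function.LeftInverse (Matrix.toLin' Q) (Matrix.toLin' P) := fun x => by
      rw [← Matrix.toLin'_mul_apply, hQP, Matrix.toLin'_one, LinearMap.id_apply]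
    exact this.injective
  rw [LinearMap.ker_comp_of_ker_eq_bot _ hPinj]
  haveI : Invertible Q := ⟨P, hPQ, hQP⟩
  have hQ : Matrix.toLin' Q = (Q.toLinearEquiv' ‹Invertible Q› : (m → ℝ) →ₗ[ℝ] (m → ℝ)) := by
    rw [Matrix.toLinearEquiv'_apply]
  rw [hQ, LinearMap.ker_comp, Submodule.comap_equiv_eq_map_symm,
    LinearEquiv.finrank_map_eq]

lemma eig'_reindex {m m' : Type*} [Fintype m] [DecidableEq m] [Fintype m'] [DecidableEq m']
    (e : m ≃ m') (M : Matrix m m ℝ) (t : ℝ) :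
    eig' (Matrix.reindex e e M) t = eig' M t := by
  unfold eig'
  have h1 : Matrix.reindex e e M - t • (1 : Matrix m' m' ℝ)
      = Matrix.reindex e e (M - t • 1) := by
    ext i j
    simp [Matrix.one_apply, Equiv.symm_apply_eq]
  rw [h1]
  set N := M - t • (1 : Matrix m m ℝ)
  have hker : LinearMap.ker (Matrix.toLin' (Matrix.reindex e e N))
      = Submodule.comap (LinearEquiv.funCongrLeft ℝ ℝ e.symm : (m → ℝ) ≃ₗ[ℝ] (m' → ℝ)).symm.toLinearMap
          (LinearMap.ker (Matrix.toLin' N)) := by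
    ext x
    simp only [LinearMap.mem_ker, Submodule.mem_comap, Matrix.toLin'_apply]
    rw [Matrix.reindex_apply, Matrix.submatrix_mulVec_equiv]
    constructor
    · intro h
      have : ∀ j, (N *ᵥ (x ∘ e)) (e.symm (e j)) = 0 := fun j => by
        rw [Equiv.symm_apply_apply]
        have := congrFun h (e j)
        simpa using this
      funext j
      have h2 := congrFun h (e j)
      simp at h2 ⊢; exact h2
    · intro h
      funext i
      have := congrFun h (e.symm i)
      simp at this ⊢; exact this
  rw [hker]
  rw [Submodule.comap_equiv_eq_map_symm, LinearEquiv.finrank_map_eq]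


lemma eig'_diagonal {n : ℕ} (d : Fin n → ℝ) (t : ℝ) :
    eig' (Matrix.diagonal d) t = Fintype.card {i // d i = t} := by
  classical
  unfold eig'
  have hmv : ∀ x : Fin n → ℝ, (Matrix.diagonal d - t • 1) *ᵥ x = fun i => (d i - t) * x i := by
    intro x; funext i
    simp [Matrix.sub_mulVec, Matrix.mulVec_diagonal, Matrix.smul_mulVec]
    ring
  let Φ : ({i // d i = t} → ℝ) →ₗ[ℝ] (Fin n → ℝ) :=
  { toFun := fun y i => if h : d i = t then y ⟨i, h⟩ else 0
    map_add' := by intro y z; funext i; by_cases h : d i = t <;> simp [h]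
    map_smul' := by intro r y; funext i; by_cases h : d i = t <;> simp [h] }
  refine finrank_ker_of _ Φ ?_ ?_ |>.trans (Module.finrank_pi ℝ)
  · intro y z h
    funext p
    have := congrFun h p.1
    simpa [Φ, p.2] using this
  · ext x
    simp only [LinearMap.mem_range, LinearMap.mem_ker, Matrix.toLin'_apply, hmv]
    constructor
    · rintro ⟨y, rfl⟩
      funext i
      by_cases h : d i = t <;> simp [Φ, h]
    · intro hx
      refine ⟨fun p => x p.1, ?_⟩
      funext i
      by_cases h : d i = t
      · simp [Φ, h]
      · have := congrFun hx i
        simp only [Pi.zero_apply] at this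
        have hxi : x i = 0 := by
          rcases mul_eq_zero.mp this with h' | h'
          · exact absurd (sub_eq_zero.mp h') h
          · exact h'
        simp [Φ, h, hxi]

noncomputable def arrow {n : ℕ} (c : ℝ) (w d : Fin n → ℝ) :
    Matrix (Fin 1 ⊕ Fin n) (Fin 1 ⊕ Fin n) ℝ :=
  Matrix.fromBlocks (Matrix.of fun _ _ => c) (Matrix.of fun _ j => w j)
    (Matrix.of fun i _ => w i) (Matrix.diagonal d)

lemma arrow_sub_apply₁₁ {n : ℕ} (c : ℝ) (w d : Fin n → ℝ) (t : ℝ) (a b : Fin 1) :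
    (arrow c w d - t • 1) (Sum.inl a) (Sum.inl b) = c - t := by
  have : a = b := Subsingleton.elim _ _
  subst this
  simp [arrow, Matrix.one_apply]

lemma arrow_sub_apply₁₂ {n : ℕ} (c : ℝ) (w d : Fin n → ℝ) (t : ℝ) (a : Fin 1) (j : Fin n) :
    (arrow c w d - t • 1) (Sum.inl a) (Sum.inr j) = w j := by
  simp [arrow, Matrix.one_apply]

lemma arrow_sub_apply₂₁ {n : ℕ} (c : ℝ) (w d : Fin n → ℝ) (t : ℝ) (i : Fin n) (a : Fin 1) :
    (arrow c w d - t • 1) (Sum.inr i) (Sum.inl a) = w i := by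
  simp [arrow, Matrix.one_apply]

lemma arrow_sub_apply₂₂ {n : ℕ} (c : ℝ) (w d : Fin n → ℝ) (t : ℝ) (i j : Fin n) :
    (arrow c w d - t • 1) (Sum.inr i) (Sum.inr j) = if i = j then d i - t else 0 := by
  simp only [arrow, Matrix.sub_apply, Matrix.smul_apply, Matrix.fromBlocks_apply₂₂,
    Matrix.diagonal_apply, Matrix.one_apply, Sum.inr.injEq, smul_eq_mul]
  split <;> simp

lemma arrow_mulVec {n : ℕ} (c : ℝ) (w d : Fin n → ℝ) (t : ℝ) (x : Fin 1 ⊕ Fin n → ℝ) :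
    ((arrow c w d - t • 1) *ᵥ x) = Sum.elim
      (fun _ => (c - t) * x (Sum.inl 0) + ∑ i, w i * x (Sum.inr i))
      (fun i => w i * x (Sum.inl 0) + (d i - t) * x (Sum.inr i)) := by
  funext k
  cases k with
  | inl a =>
    have ha : a = 0 := Subsingleton.elim _ _
    subst ha
    simp only [Matrix.mulVec, dotProduct, Fintype.sum_sum_type, Sum.elim_inl,
      arrow_sub_apply₁₁, arrow_sub_apply₁₂]
    simp [Fin.sum_univ_one]
  | inr i =>
    simp only [Matrix.mulVec, dotProduct, Fintype.sum_sum_type, Sum.elim_inr,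
      arrow_sub_apply₂₁, arrow_sub_apply₂₂]
    simp only [ite_mul, zero_mul, Finset.sum_ite_eq, Finset.mem_univ, if_true]
    simp [Fin.sum_univ_one]

lemma mem_ker_arrow {n : ℕ} (c : ℝ) (w d : Fin n → ℝ) (t : ℝ) (x : Fin 1 ⊕ Fin n → ℝ) :
    x ∈ LinearMap.ker (Matrix.toLin' (arrow c w d - t • 1)) ↔
      ((c - t) * x (Sum.inl 0) + ∑ i, w i * x (Sum.inr i) = 0) ∧
      (∀ i, w i * x (Sum.inl 0) + (d i - t) * x (Sum.inr i) = 0) := by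
  rw [LinearMap.mem_ker, Matrix.toLin'_apply, arrow_mulVec, funext_iff]
  rw [Sum.forall]
  simp [Fin.forall_fin_one]


section Cases
variable {n : ℕ} (c : ℝ) (w d : Fin n → ℝ) (t : ℝ)

lemma eig'_arrow_case1 (i₀ : Fin n) (h₀ : d i₀ = t) (hw₀ : w i₀ ≠ 0)
    (hw : ∀ i, d i = t → i ≠ i₀ → w i = 0) :
    eig' (arrow c w d) t = Fintype.card {i // d i = t} - 1 := by
  unfold eig'
  let Φ : ({i // d i = t ∧ i ≠ i₀} → ℝ) →ₗ[ℝ] (Fin 1 ⊕ Fin n → ℝ) :=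
  { toFun := fun y => Sum.elim (fun _ => 0)
      (fun i => if h : d i = t ∧ i ≠ i₀ then y ⟨i, h⟩ else 0)
    map_add' := by
      intro y z; funext k
      cases k with
      | inl a => simp
      | inr i => by_cases h : d i = t ∧ i ≠ i₀ <;> simp [h]
    map_smul' := by
      intro r y; funext k
      cases k with
      | inl a => simp
      | inr i => by_cases h : d i = t ∧ i ≠ i₀ <;> simp [h] }
  have hcard : Fintype.card {i // d i = t ∧ i ≠ i₀} = Fintype.card {i // d i = t} - 1 := by
    rw [Fintype.card_subtype, Fintype.card_subtype]
    have he : Finset.filter (fun i => d i = t ∧ i ≠ i₀) Finset.univ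
        = (Finset.filter (fun i => d i = t) Finset.univ).erase i₀ := by
      ext i; simp [Finset.mem_erase, and_comm]
    rw [he, Finset.card_erase_of_mem (by simp [h₀])]
  refine (finrank_ker_of _ Φ ?_ ?_).trans ((Module.finrank_pi ℝ).trans hcard)
  · intro y z h
    funext p
    have := congrFun h (Sum.inr p.1)
    simpa [Φ, p.2] using this
  · ext x
    rw [mem_ker_arrow]
    constructor
    · rintro ⟨y, rfl⟩
      constructor
      · simp only [Φ, LinearMap.coe_mk, AddHom.coe_mk, Sum.elim_inl, Sum.elim_inr, mul_zero]
        rw [zero_add]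
        refine Finset.sum_eq_zero fun i _ => ?_
        by_cases h : d i = t ∧ i ≠ i₀
        · rw [hw i h.1 h.2, zero_mul]
        · rw [dif_neg h, mul_zero]
      · intro i
        simp only [Φ, LinearMap.coe_mk, AddHom.coe_mk, Sum.elim_inl, Sum.elim_inr, mul_zero]
        by_cases h : d i = t ∧ i ≠ i₀
        · have hd0 : d i - t = 0 := by rw [h.1, sub_self]
          rw [hd0]; ring
        · rw [dif_neg h, mul_zero]; ring
    · rintro ⟨h1, h2⟩
      have hx0 : x (Sum.inl 0) = 0 := by
        have := h2 i₀
        rw [h₀, sub_self, zero_mul, add_zero] at this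
        exact (mul_eq_zero.mp this).resolve_left hw₀
      have hoff : ∀ i, d i ≠ t → x (Sum.inr i) = 0 := by
        intro i h
        have := h2 i
        rw [hx0, mul_zero, zero_add] at this
        rcases mul_eq_zero.mp this with h' | h'
        · exact absurd (sub_eq_zero.mp h') h
        · exact h'
      have hxi₀ : x (Sum.inr i₀) = 0 := by
        have hs : ∑ i, w i * x (Sum.inr i) = w i₀ * x (Sum.inr i₀) := by
          refine Finset.sum_eq_single i₀ (fun i _ hi => ?_) (by simp)
          by_cases h : d i = t
          · rw [hw i h hi, zero_mul]
          · rw [hoff i h, mul_zero]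
        rw [hx0, mul_zero, zero_add, hs] at h1
        exact (mul_eq_zero.mp h1).resolve_left hw₀
      refine ⟨fun p => x (Sum.inr p.1), ?_⟩
      funext k
      cases k with
      | inl a =>
        have : a = 0 := Subsingleton.elim _ _
        subst this
        simp [Φ, hx0]
      | inr i =>
        by_cases h : d i = t ∧ i ≠ i₀
        · simp [Φ, h]
        · push_neg at h
          by_cases hd : d i = t
          · have : i = i₀ := h hd
            subst this
            simp [Φ, hd, hxi₀]
          · simp [Φ, hd, hoff i hd]

lemma eig'_arrow_case2a (hw : ∀ i, d i = t → w i = 0)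
    (hg : (c - t) + ∑ i, (if d i = t then (0:ℝ) else w i ^ 2 / (t - d i)) ≠ 0) :
    eig' (arrow c w d) t = Fintype.card {i // d i = t} := by
  unfold eig'
  let Φ : ({i // d i = t} → ℝ) →ₗ[ℝ] (Fin 1 ⊕ Fin n → ℝ) :=
  { toFun := fun y => Sum.elim (fun _ => 0)
      (fun i => if h : d i = t then y ⟨i, h⟩ else 0)
    map_add' := by
      intro y z; funext k
      cases k with
      | inl a => simp
      | inr i => by_cases h : d i = t <;> simp [h]
    map_smul' := by
      intro r y; funext k
      cases k with
      | inl a => simp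
      | inr i => by_cases h : d i = t <;> simp [h] }
  refine (finrank_ker_of _ Φ ?_ ?_).trans (Module.finrank_pi ℝ)
  · intro y z h
    funext p
    have := congrFun h (Sum.inr p.1)
    simpa [Φ, p.2] using this
  · ext x
    rw [mem_ker_arrow]
    constructor
    · rintro ⟨y, rfl⟩
      constructor
      · simp only [Φ, LinearMap.coe_mk, AddHom.coe_mk, Sum.elim_inl, Sum.elim_inr, mul_zero]
        rw [zero_add]
        refine Finset.sum_eq_zero fun i _ => ?_
        by_cases h : d i = t
        · rw [hw i h, zero_mul]
        · rw [dif_neg h, mul_zero]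
      · intro i
        simp only [Φ, LinearMap.coe_mk, AddHom.coe_mk, Sum.elim_inl, Sum.elim_inr, mul_zero]
        by_cases h : d i = t
        · have hd0 : d i - t = 0 := by rw [h, sub_self]
          rw [hd0]; ring
        · rw [dif_neg h, mul_zero]; ring
    · rintro ⟨h1, h2⟩
      have hxi : ∀ i, d i ≠ t → x (Sum.inr i) = w i * x (Sum.inl 0) / (t - d i) := by
        intro i h
        have hne : t - d i ≠ 0 := sub_ne_zero.mpr (Ne.symm h)
        have := h2 i
        field_simp
        linarith [this]
      have hsum : ∑ i, w i * x (Sum.inr i)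
          = (∑ i, if d i = t then (0:ℝ) else w i ^ 2 / (t - d i)) * x (Sum.inl 0) := by
        rw [Finset.sum_mul]
        refine Finset.sum_congr rfl fun i _ => ?_
        by_cases h : d i = t
        · simp [hw i h, h]
        · rw [if_neg h, hxi i h]
          have hne : t - d i ≠ 0 := sub_ne_zero.mpr (Ne.symm h)
          field_simp
      have hx0 : x (Sum.inl 0) = 0 := by
        rw [hsum, ← add_mul] at h1
        exact (mul_eq_zero.mp h1).resolve_left hg
      have hoff : ∀ i, d i ≠ t → x (Sum.inr i) = 0 := by
        intro i h
        rw [hxi i h, hx0, mul_zero, zero_div]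
      refine ⟨fun p => x (Sum.inr p.1), ?_⟩
      funext k
      cases k with
      | inl a =>
        have : a = 0 := Subsingleton.elim _ _
        subst this
        simp [Φ, hx0]
      | inr i =>
        by_cases h : d i = t
        · simp [Φ, h]
        · simp [Φ, h, hoff i h]

lemma eig'_arrow_case2b (hw : ∀ i, d i = t → w i = 0)
    (hg : (c - t) + ∑ i, (if d i = t then (0:ℝ) else w i ^ 2 / (t - d i)) = 0) :
    eig' (arrow c w d) t = Fintype.card {i // d i = t} + 1 := by
  unfold eig'
  let Φ : (ℝ × ({i // d i = t} → ℝ)) →ₗ[ℝ] (Fin 1 ⊕ Fin n → ℝ) :=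
  { toFun := fun z => Sum.elim (fun _ => z.1)
      (fun i => if h : d i = t then z.2 ⟨i, h⟩ else w i * z.1 / (t - d i))
    map_add' := by
      intro y z; funext k
      cases k with
      | inl a => simp
      | inr i =>
        by_cases h : d i = t <;> simp [h]
        ring
    map_smul' := by
      intro r y; funext k
      cases k with
      | inl a => simp
      | inr i =>
        by_cases h : d i = t <;> simp [h]
        ring }
  have : Module.finrank ℝ (ℝ × ({i // d i = t} → ℝ)) = Fintype.card {i // d i = t} + 1 := by
    rw [Module.finrank_prod, Module.finrank_self, Module.finrank_pi]
    omega
  rw [← this]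
  refine finrank_ker_of _ Φ ?_ ?_
  · intro y z h
    have h0 := congrFun h (Sum.inl 0)
    simp only [Φ, LinearMap.coe_mk, AddHom.coe_mk, Sum.elim_inl] at h0
    refine Prod.ext h0 ?_
    funext p
    have := congrFun h (Sum.inr p.1)
    simpa [Φ, p.2] using this
  · ext x
    rw [mem_ker_arrow]
    constructor
    · rintro ⟨⟨z, y⟩, rfl⟩
      constructor
      · simp only [Φ, LinearMap.coe_mk, AddHom.coe_mk, Sum.elim_inl, Sum.elim_inr]
        have hsum : ∑ i, w i * (if h : d i = t then y ⟨i, h⟩ else w i * z / (t - d i))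
            = (∑ i, if d i = t then (0:ℝ) else w i ^ 2 / (t - d i)) * z := by
          rw [Finset.sum_mul]
          refine Finset.sum_congr rfl fun i _ => ?_
          by_cases h : d i = t
          · simp [hw i h, h]
          · rw [dif_neg h, if_neg h]
            have hne : t - d i ≠ 0 := sub_ne_zero.mpr fun he => h he.symm
            field_simp
        rw [hsum, ← add_mul, hg, zero_mul]
      · intro i
        simp only [Φ, LinearMap.coe_mk, AddHom.coe_mk, Sum.elim_inl, Sum.elim_inr]
        by_cases h : d i = t
        · have hd0 : d i - t = 0 := by rw [h, sub_self]
          rw [dif_pos h, hw i h, hd0]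
          ring
        · rw [dif_neg h]
          have hne : t - d i ≠ 0 := sub_ne_zero.mpr fun he => h he.symm
          field_simp
          ring
    · rintro ⟨h1, h2⟩
      have hxi : ∀ i, d i ≠ t → x (Sum.inr i) = w i * x (Sum.inl 0) / (t - d i) := by
        intro i h
        have hne : t - d i ≠ 0 := sub_ne_zero.mpr (Ne.symm h)
        have := h2 i
        field_simp
        linarith [this]
      refine ⟨⟨x (Sum.inl 0), fun p => x (Sum.inr p.1)⟩, ?_⟩
      funext k
      cases k with
      | inl a =>
        have : a = 0 := Subsingleton.elim _ _
        subst this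
        simp [Φ]
      | inr i =>
        by_cases h : d i = t
        · simp [Φ, h]
        · simp only [Φ, LinearMap.coe_mk, AddHom.coe_mk, Sum.elim_inr]
          rw [dif_neg h, ← hxi i h]

end Cases


lemma prod_pos_sign {m : ℕ} (f : Fin m → ℝ) (T : Finset (Fin m))
    (hneg : ∀ i ∈ T, f i < 0) (hpos : ∀ i ∉ T, 0 < f i) :
    0 < (-1 : ℝ) ^ T.card * ∏ i, f i := by
  have h1 : ∏ i ∈ T, f i = (-1 : ℝ) ^ T.card * ∏ i ∈ T, (-f i) := by
    rw [← Finset.prod_const, ← Finset.prod_mul_distrib]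
    exact Finset.prod_congr rfl fun i _ => by ring
  have h2 : (∏ i ∈ T, f i) * ∏ i ∈ Tᶜ, f i = ∏ i, f i := Finset.prod_mul_prod_compl T f
  have hp1 : 0 < ∏ i ∈ T, (-f i) := Finset.prod_pos fun i hi => by linarith [hneg i hi]
  have hp2 : 0 < ∏ i ∈ Tᶜ, f i := Finset.prod_pos fun i hi => hpos i (Finset.mem_compl.mp hi)
  have hsq : (-1 : ℝ) ^ T.card * (-1 : ℝ) ^ T.card = 1 := by
    rw [← pow_add]
    exact Even.neg_one_pow ⟨T.card, rfl⟩
  have key : (-1 : ℝ) ^ T.card * ∏ i, f i = (∏ i ∈ T, (-f i)) * ∏ i ∈ Tᶜ, f i := by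
    rw [← h2, h1]
    linear_combination (∏ i ∈ T, (-f i)) * (∏ i ∈ Tᶜ, f i) * hsq
  rw [key]
  exact mul_pos hp1 hp2

lemma key_identity {s : ℕ} (μ : Fin s → ℝ) (hμ : StrictMono μ)
    (ν : Fin (s + 1) → ℝ) (hν : StrictMono ν)
    (hinter : ∀ i : Fin s, ν i.castSucc < μ i ∧ μ i < ν i.succ) :
    ∃ aa : Fin s → ℝ, (∀ k, 0 < aa k) ∧
      ∀ t : ℝ, (t - ((∑ j, ν j) - ∑ k, μ k)) * ∏ k, (t - μ k) - ∏ j, (t - ν j)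
        = ∑ k, aa k * ∏ i ∈ Finset.univ.erase k, (t - μ i) := by
  classical
  set cc : ℝ := (∑ j, ν j) - ∑ k, μ k with hcc
  set ρ : Fin (s + 1) → ℝ := Fin.cons cc μ with hρ
  set q₂ : ℝ[X] := ∏ k, (X - C (ρ k)) with hq₂
  set q₁ : ℝ[X] := ∏ j, (X - C (ν j)) with hq₁
  set p : ℝ[X] := q₂ - q₁ with hp
  set P₁ : Fin s → ℝ := fun k => ∏ j, (μ k - ν j) with hP₁
  set aa : Fin s → ℝ := fun k =>
    (-P₁ k) * (∏ i ∈ Finset.univ.erase k, (μ k - μ i))⁻¹ with haa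
  -- degrees
  have hq₂deg : q₂.natDegree = s + 1 := by
    rw [hq₂, Polynomial.natDegree_prod _ _ (fun k _ => X_sub_C_ne_zero (ρ k))]
    simp [Polynomial.natDegree_X_sub_C]
  have hq₁deg : q₁.natDegree = s + 1 := by
    rw [hq₁, Polynomial.natDegree_prod _ _ (fun j _ => X_sub_C_ne_zero (ν j))]
    simp [Polynomial.natDegree_X_sub_C]
  have hq₂monic : q₂.Monic := monic_prod_of_monic _ _ fun k _ => monic_X_sub_C (ρ k)
  have hq₁monic : q₁.Monic := monic_prod_of_monic _ _ fun j _ => monic_X_sub_C (ν j)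
  have hsumρ : ∑ i, ρ i = ∑ j, ν j := by
    rw [hρ, Fin.sum_univ_succ]
    simp [hcc]
  have hdeg : p.degree < (s : WithBot ℕ) := by
    rw [Polynomial.degree_lt_iff_coeff_zero]
    intro m hm
    have hm' : s ≤ m := by exact_mod_cast hm
    rw [hp, Polynomial.coeff_sub]
    rcases show m = s ∨ m = s + 1 ∨ s + 2 ≤ m by omega with h | h | h
    · rw [h]
      have e2 : q₂.coeff s = -∑ i, ρ i := by
        have := Polynomial.prod_X_sub_C_coeff_card_pred Finset.univ ρ
          (by simp : 0 < #(Finset.univ : Finset (Fin (s+1))))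
        simpa using this
      have e1 : q₁.coeff s = -∑ j, ν j := by
        have := Polynomial.prod_X_sub_C_coeff_card_pred Finset.univ ν
          (by simp : 0 < #(Finset.univ : Finset (Fin (s+1))))
        simpa using this
      rw [e2, e1, hsumρ, sub_self]
    · rw [h]
      have e2 : q₂.coeff (s + 1) = 1 := by
        have := hq₂monic.coeff_natDegree
        rwa [hq₂deg] at this
      have e1 : q₁.coeff (s + 1) = 1 := by
        have := hq₁monic.coeff_natDegree
        rwa [hq₁deg] at this
      rw [e2, e1, sub_self]
    · rw [Polynomial.coeff_eq_zero_of_natDegree_lt (by omega : q₂.natDegree < m),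
        Polynomial.coeff_eq_zero_of_natDegree_lt (by omega : q₁.natDegree < m), sub_self]
  have hinjOn : Set.InjOn μ (Finset.univ : Finset (Fin s)) := hμ.injective.injOn
  have hinterp : p = Lagrange.interpolate Finset.univ μ fun k => p.eval (μ k) :=
    Lagrange.eq_interpolate hinjOn (by simpa using hdeg)
  -- evaluation of p at nodes
  have hreval : ∀ k, p.eval (μ k) = -P₁ k := by
    intro k
    have h2 : q₂.eval (μ k) = 0 := by
      rw [hq₂, Polynomial.eval_prod]
      refine Finset.prod_eq_zero (Finset.mem_univ k.succ) ?_
      simp [hρ]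
    have h1 : q₁.eval (μ k) = P₁ k := by
      rw [hq₁, Polynomial.eval_prod, hP₁]
      simp
    rw [hp, Polynomial.eval_sub, h2, h1, zero_sub]
  -- positivity
  have hP₂ne : ∀ k : Fin s, 0 < (-1:ℝ) ^ (s - 1 - (k : ℕ)) * ∏ i ∈ Finset.univ.erase k, (μ k - μ i) := by
    intro k
    have hext : ∏ i ∈ Finset.univ.erase k, (μ k - μ i)
        = ∏ i, (if i = k then 1 else μ k - μ i) := by
      rw [← Finset.mul_prod_erase Finset.univ _ (Finset.mem_univ k)]
      rw [if_pos rfl, one_mul]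
      exact (Finset.prod_congr rfl fun i hi => by
        rw [if_neg (Finset.mem_erase.mp hi).1]).symm
    rw [hext]
    have hcard : (Finset.Ioi k).card = s - 1 - (k : ℕ) := Fin.card_Ioi k
    rw [← hcard]
    apply prod_pos_sign
    · intro i hi
      rw [Finset.mem_Ioi] at hi
      rw [if_neg (ne_of_gt hi)]
      have := hμ hi
      linarith
    · intro i hi
      rw [Finset.mem_Ioi, not_lt] at hi
      rcases eq_or_lt_of_le hi with h | h
      · rw [if_pos h.symm.symm]; norm_num
      · rw [if_neg (ne_of_lt h)]
        have := hμ h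
        linarith
  have hP₁sign : ∀ k : Fin s, 0 < (-1:ℝ) ^ (s - (k : ℕ)) * P₁ k := by
    intro k
    rw [hP₁]
    have hcard : (Finset.Ioi k.castSucc).card = s - (k : ℕ) := by
      rw [Fin.card_Ioi]
      simp
    rw [← hcard]
    apply prod_pos_sign
    · intro j hj
      rw [Finset.mem_Ioi] at hj
      have hle : k.succ ≤ j := by
        rw [Fin.le_def]
        rw [Fin.lt_def] at hj
        simp only [Fin.coe_castSucc] at hj
        simp only [Fin.val_succ]
        omega
      have h1 : ν k.succ ≤ ν j := hν.monotone hle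
      have h2 := (hinter k).2
      linarith
    · intro j hj
      rw [Finset.mem_Ioi, not_lt] at hj
      have h1 : ν j ≤ ν k.castSucc := hν.monotone hj
      have h2 := (hinter k).1
      linarith
  have haapos : ∀ k, 0 < aa k := by
    intro k
    have hk : (k : ℕ) < s := k.isLt
    have hse : s - (k : ℕ) = (s - 1 - (k : ℕ)) + 1 := by omega
    set e := s - 1 - (k : ℕ) with he
    have h1 := hP₁sign k
    rw [hse] at h1
    have h2 := hP₂ne k
    set P₂ := ∏ i ∈ Finset.univ.erase k, (μ k - μ i) with hP₂
    have hne : ((-1:ℝ)) ^ e ≠ 0 := pow_ne_zero _ (by norm_num)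
    have hP₂ne0 : P₂ ≠ 0 := by
      intro h0
      rw [h0, mul_zero] at h2
      exact lt_irrefl 0 h2
    have heq : aa k = ((-1:ℝ) ^ (e + 1) * P₁ k) / ((-1:ℝ) ^ e * P₂) := by
      rw [haa]
      rw [pow_succ]
      simp only [← hP₂]
      field_simp
    rw [heq]
    exact div_pos h1 h2
  refine ⟨aa, haapos, fun t => ?_⟩
  -- evaluation of the interpolation identity at t
  have hlhs : p.eval t = (t - cc) * ∏ k, (t - μ k) - ∏ j, (t - ν j) := by
    rw [hp, Polynomial.eval_sub, hq₂, hq₁, Polynomial.eval_prod, Polynomial.eval_prod]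
    congr 1
    · rw [Fin.prod_univ_succ]
      simp [hρ]
    · simp
  have hrhs : (Lagrange.interpolate Finset.univ μ fun k => p.eval (μ k)).eval t
      = ∑ k, aa k * ∏ i ∈ Finset.univ.erase k, (t - μ i) := by
    rw [Lagrange.interpolate]
    simp only [LinearMap.coe_mk, AddHom.coe_mk]
    rw [Polynomial.eval_finset_sum]
    refine Finset.sum_congr rfl fun k _ => ?_
    rw [Polynomial.eval_mul, Polynomial.eval_C, hreval k]
    rw [Lagrange.basis, Polynomial.eval_prod]
    have : ∀ i ∈ Finset.univ.erase k,
        (Lagrange.basisDivisor (μ k) (μ i)).eval t = (μ k - μ i)⁻¹ * (t - μ i) := by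
      intro i _
      simp [Lagrange.basisDivisor]
    rw [Finset.prod_congr rfl this, Finset.prod_mul_distrib, Finset.prod_inv_distrib]
    simp only [haa]
    ring
  calc (t - cc) * ∏ k, (t - μ k) - ∏ j, (t - ν j) = p.eval t := hlhs.symm
    _ = (Lagrange.interpolate Finset.univ μ fun k => p.eval (μ k)).eval t := by
          rw [← hinterp]
    _ = _ := hrhs



lemma eigMult_ne_zero_of_mem_spectrum {n : ℕ} (A : Matrix (Fin n) (Fin n) ℝ) (t : ℝ)
    (h : t ∈ spectrum ℝ A) : eigMult A t ≠ 0 := by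
  intro h0
  have hker : LinearMap.ker (Matrix.toLin' (A - t • (1 : Matrix (Fin n) (Fin n) ℝ))) = ⊥ :=
    Submodule.finrank_eq_zero.mp h0
  have hdet : (A - t • (1 : Matrix (Fin n) (Fin n) ℝ)).det ≠ 0 := by
    intro hdet
    obtain ⟨v, hv0, hv⟩ := (Matrix.exists_mulVec_eq_zero_iff).mpr hdet
    have hm : v ∈ LinearMap.ker (Matrix.toLin' (A - t • (1 : Matrix (Fin n) (Fin n) ℝ))) := by
      rw [LinearMap.mem_ker, Matrix.toLin'_apply, hv]
    rw [hker, Submodule.mem_bot] at hm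
    exact hv0 hm
  have hunit : IsUnit (A - t • (1 : Matrix (Fin n) (Fin n) ℝ)) :=
    (Matrix.isUnit_iff_isUnit_det _).mpr (isUnit_iff_ne_zero.mpr hdet)
  rw [spectrum.mem_iff] at h
  apply h
  have he : algebraMap ℝ (Matrix (Fin n) (Fin n) ℝ) t - A = -(A - t • 1) := by
    rw [Algebra.algebraMap_eq_smul_one, neg_sub]
  rw [he]
  exact hunit.neg

end Stmt7Aux

/-- Let `A` be a symmetric matrix, `R₀ = {μ 0 < ⋯ < μ (s-1)}` a set of eigenvalues of `A`,
and `N = {ν 0 < ⋯ < ν s}` a set of `s + 1` distinct reals strictly interlacing `R₀`.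
Then there is a symmetric `1`-bordering `A'` of `A` whose eigenvalue multiplicities drop by
one on `R₀`, increase by one on `N`, and are otherwise unchanged. -/
theorem stmt7 {n s : ℕ} (A : Matrix (Fin n) (Fin n) ℝ) (hA : A.IsSymm)
    (μ : Fin s → ℝ) (hμ : StrictMono μ) (hμspec : Set.range μ ⊆ spectrum ℝ A)
    (ν : Fin (s + 1) → ℝ) (hν : StrictMono ν)
    (hinter : ∀ i : Fin s, ν i.castSucc < μ i ∧ μ i < ν i.succ) :
    ∃ A' : Matrix (Fin (1 + n)) (Fin (1 + n)) ℝ, A'.IsSymm ∧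
      (∀ i j : Fin n, A' (Fin.natAdd 1 i) (Fin.natAdd 1 j) = A i j) ∧
      (∀ i : Fin s, eigMult A' (μ i) = eigMult A (μ i) - 1) ∧
      (∀ i : Fin (s + 1), eigMult A' (ν i) = eigMult A (ν i) + 1) ∧
      (∀ t : ℝ, t ∉ Set.range μ → t ∉ Set.range ν → eigMult A' t = eigMult A t) := by
  classical
  -- Spectral decomposition
  have hH : A.IsHermitian := by
    rw [Matrix.IsHermitian, Matrix.conjTranspose_eq_transpose_of_trivial]
    exact hA
  set d : Fin n → ℝ := hH.eigenvalues with hd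
  set U : Matrix (Fin n) (Fin n) ℝ := (hH.eigenvectorUnitary : Matrix (Fin n) (Fin n) ℝ) with hU
  have hU1 : U * star U = 1 := Matrix.mem_unitaryGroup_iff.mp hH.eigenvectorUnitary.2
  have hU2 : star U * U = 1 := Matrix.mem_unitaryGroup_iff'.mp hH.eigenvectorUnitary.2
  have hAdecomp : A = U * Matrix.diagonal d * star U := by
    have := hH.spectral_theorem
    rwa [RCLike.ofReal_real_eq_id, Function.id_comp] at this
  have heigA : ∀ t, eigMult A t = Fintype.card {i // d i = t} := by
    intro t
    rw [Stmt7Aux.eigMult_eq_eig', hAdecomp,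
      Stmt7Aux.eig'_conj (Matrix.diagonal d) U (star U) hU1 hU2, Stmt7Aux.eig'_diagonal]
  -- choose eigenvector indices for the μ's
  have hspec : ∀ k : Fin s, ∃ i, d i = μ k := by
    intro k
    by_contra hno
    push_neg at hno
    have h0 : eigMult A (μ k) = 0 := by
      rw [heigA, Fintype.card_eq_zero_iff]
      exact ⟨fun p => hno p.1 p.2⟩
    exact Stmt7Aux.eigMult_ne_zero_of_mem_spectrum A (μ k) (hμspec ⟨k, rfl⟩) h0
  choose ι hι using hspec
  have hιinj : Function.Injective ι := fun k k' h =>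
    hμ.injective (by rw [← hι k, ← hι k', h])
  obtain ⟨aa, haapos, hkey⟩ := Stmt7Aux.key_identity μ hμ ν hν hinter
  set cc : ℝ := (∑ j, ν j) - ∑ k, μ k with hcc
  set w : Fin n → ℝ := fun i => ∑ k, if ι k = i then Real.sqrt (aa k) else 0 with hwdef
  have hwι : ∀ k, w (ι k) = Real.sqrt (aa k) := by
    intro k
    rw [hwdef]
    dsimp only
    rw [Finset.sum_eq_single k (fun k' _ hk' => if_neg fun he => hk' (hιinj he)) (by simp)]
    rw [if_pos rfl]
  have hw0 : ∀ i, (∀ k, ι k ≠ i) → w i = 0 := by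
    intro i h
    rw [hwdef]
    exact Finset.sum_eq_zero fun k _ => if_neg (h k)
  have hwsupp : ∀ t, t ∉ Set.range μ → ∀ i, d i = t → w i = 0 := by
    intro t ht i hdi
    refine hw0 i fun k he => ?_
    exact ht ⟨k, by rw [← hι k, he, hdi]⟩
  have hμν : ∀ (k : Fin s) (j : Fin (s + 1)), μ k ≠ ν j := by
    intro k j he
    rcases le_or_gt (j : ℕ) (k : ℕ) with h | h
    · have h1 : ν j ≤ ν k.castSucc := hν.monotone (by rw [Fin.le_def]; simpa using h)
      have h2 := (hinter k).1
      rw [he] at h2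
      linarith
    · have h1 : ν k.succ ≤ ν j := hν.monotone
        (by rw [Fin.le_def]; simp only [Fin.val_succ]; omega)
      have h2 := (hinter k).2
      rw [he] at h2
      linarith
  -- the secular function
  have hgval : ∀ t, t ∉ Set.range μ →
      (cc - t) + ∑ i, (if d i = t then (0:ℝ) else w i ^ 2 / (t - d i))
        = -(∏ j, (t - ν j)) / ∏ k, (t - μ k) := by
    intro t ht
    have hPmu : (∏ k, (t - μ k)) ≠ 0 :=
      Finset.prod_ne_zero_iff.mpr fun k _ => sub_ne_zero.mpr fun he => ht ⟨k, he.symm⟩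
    have hre : ∑ i, (if d i = t then (0:ℝ) else w i ^ 2 / (t - d i))
        = ∑ k, aa k / (t - μ k) := by
      have hzero : ∀ i ∈ Finset.univ, i ∉ Finset.univ.image ι →
          (if d i = t then (0:ℝ) else w i ^ 2 / (t - d i)) = 0 := by
        intro i _ hni
        have hwi : w i = 0 :=
          hw0 i fun k he => hni (Finset.mem_image.mpr ⟨k, Finset.mem_univ k, he⟩)
        split
        · rfl
        · rw [hwi]
          norm_num
      rw [← Finset.sum_subset (Finset.subset_univ _) hzero]
      rw [Finset.sum_image (fun k _ k' _ h => hιinj h)]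
      refine Finset.sum_congr rfl fun k _ => ?_
      have hμkt : μ k ≠ t := fun he => ht ⟨k, he⟩
      simp only [hι k, hwι k]
      rw [if_neg hμkt, Real.sq_sqrt (le_of_lt (haapos k))]
    rw [hre]
    have hsplit : ∑ k, aa k / (t - μ k)
        = (∑ k, aa k * ∏ i ∈ Finset.univ.erase k, (t - μ i)) / ∏ k, (t - μ k) := by
      rw [Finset.sum_div]
      refine Finset.sum_congr rfl fun k _ => ?_
      have hne : t - μ k ≠ 0 := sub_ne_zero.mpr fun he => ht ⟨k, he.symm⟩
      rw [div_eq_div_iff hne hPmu,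
        ← Finset.mul_prod_erase Finset.univ (fun i => t - μ i) (Finset.mem_univ k)]
      ring
    rw [hsplit, ← hkey t]
    field_simp
    ring
  -- construction of the bordered matrix
  set Bm := Stmt7Aux.arrow cc w d with hBm
  set P : Matrix (Fin 1 ⊕ Fin n) (Fin 1 ⊕ Fin n) ℝ := Matrix.fromBlocks 1 0 0 U with hPdef
  set Q : Matrix (Fin 1 ⊕ Fin n) (Fin 1 ⊕ Fin n) ℝ := Matrix.fromBlocks 1 0 0 (star U)
    with hQdef
  have hPQ : P * Q = 1 := by
    rw [hPdef, hQdef, Matrix.fromBlocks_multiply]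
    simp [hU1, Matrix.fromBlocks_one]
  have hQP : Q * P = 1 := by
    rw [hPdef, hQdef, Matrix.fromBlocks_multiply]
    simp [hU2, Matrix.fromBlocks_one]
  set A' := Matrix.reindex finSumFinEquiv finSumFinEquiv (P * Bm * Q) with hA'def
  have hstar : star U = Uᵀ := by
    rw [Matrix.star_eq_conjTranspose, Matrix.conjTranspose_eq_transpose_of_trivial]
  have hBsymm : Bmᵀ = Bm := by
    rw [hBm]
    unfold Stmt7Aux.arrow
    rw [Matrix.fromBlocks_transpose, Matrix.diagonal_transpose]
    congr 1 <;> ext i j <;> simp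
  have hPt : Pᵀ = Q := by
    rw [hPdef, hQdef, Matrix.fromBlocks_transpose, hstar]
    simp
  have hQt : Qᵀ = P := by
    rw [hPdef, hQdef, Matrix.fromBlocks_transpose, hstar]
    simp
  have hsymm' : (P * Bm * Q)ᵀ = P * Bm * Q := by
    rw [Matrix.transpose_mul, Matrix.transpose_mul, hBsymm, hPt, hQt, Matrix.mul_assoc]
  have hA'symm : A'.IsSymm := by
    rw [Matrix.IsSymm, hA'def, Matrix.reindex_apply, Matrix.transpose_submatrix, hsymm']
  have hblock : P * Bm * Q = Matrix.fromBlocks (Matrix.of fun _ _ => cc)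
      ((Matrix.of fun (_ : Fin 1) j => w j) * star U)
      (U * Matrix.of fun i (_ : Fin 1) => w i) (U * Matrix.diagonal d * star U) := by
    rw [hPdef, hQdef, hBm]
    unfold Stmt7Aux.arrow
    rw [Matrix.fromBlocks_multiply, Matrix.fromBlocks_multiply]
    simp [Matrix.mul_assoc]
  have hentry : ∀ i j, A' (Fin.natAdd 1 i) (Fin.natAdd 1 j) = A i j := by
    intro i j
    rw [hA'def, Matrix.reindex_apply, Matrix.submatrix_apply,
      finSumFinEquiv_symm_apply_natAdd, finSumFinEquiv_symm_apply_natAdd, hblock,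
      Matrix.fromBlocks_apply₂₂, ← hAdecomp]
  have heig : ∀ t, eigMult A' t = Stmt7Aux.eig' (Stmt7Aux.arrow cc w d) t := by
    intro t
    rw [Stmt7Aux.eigMult_eq_eig', hA'def, Stmt7Aux.eig'_reindex,
      Stmt7Aux.eig'_conj Bm P Q hPQ hQP, hBm]
  refine ⟨A', hA'symm, hentry, ?_, ?_, ?_⟩
  · -- μ k : multiplicity drops by one
    intro k
    rw [heig, heigA]
    refine Stmt7Aux.eig'_arrow_case1 cc w d (μ k) (ι k) (hι k) ?_ ?_
    · rw [hwι k]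
      exact ne_of_gt (Real.sqrt_pos.mpr (haapos k))
    · intro i hdi hne
      refine hw0 i fun k' he => ?_
      have : μ k' = μ k := by rw [← hι k', he, hdi]
      exact hne (by rw [← he, hμ.injective this])
  · -- ν j : multiplicity increases by one
    intro j
    have ht1 : ν j ∉ Set.range μ := by
      rintro ⟨k, hk⟩
      exact hμν k j hk
    rw [heig, heigA]
    refine Stmt7Aux.eig'_arrow_case2b cc w d (ν j) (hwsupp (ν j) ht1) ?_
    rw [hgval (ν j) ht1]
    have hz : (∏ j' : Fin (s + 1), (ν j - ν j')) = 0 :=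
      Finset.prod_eq_zero (Finset.mem_univ j) (sub_self _)
    rw [hz]
    simp
  · -- other t : multiplicity unchanged
    intro t ht1 ht2
    rw [heig, heigA]
    refine Stmt7Aux.eig'_arrow_case2a cc w d t (hwsupp t ht1) ?_
    rw [hgval t ht1]
    apply div_ne_zero
    · rw [neg_ne_zero]
      exact Finset.prod_ne_zero_iff.mpr fun j _ => sub_ne_zero.mpr fun he => ht2 ⟨j, he.symm⟩
    · exact Finset.prod_ne_zero_iff.mpr fun k _ => sub_ne_zero.mpr fun he => ht1 ⟨k, he.symm⟩
end

section
/- Let A be an n×n real symmetric matrix, A' a 1-bordering of A, and A'' a 1-bordering of A'. If the (1,2) entry of A'' is nonzero, then there exists a real number λ such that m_{A''}(λ) = m_{A'}(λ) − 1 = m_A(λ). -/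
set_option maxHeartbeats 1000000
set_option synthInstance.maxHeartbeats 1000000

open Matrix

private lemma finrank_eq_of_functional {V W : Type*} [AddCommGroup V] [Module ℝ V]
    [FiniteDimensional ℝ V] [AddCommGroup W] [Module ℝ W]
    (f : V →ₗ[ℝ] ℝ) (v₀ : V) (hv₀ : f v₀ ≠ 0) (e : (LinearMap.ker f) ≃ₗ[ℝ] W) :
    Module.finrank ℝ V = Module.finrank ℝ W + 1 := by
  have hsurj : LinearMap.range f = ⊤ := by
    rw [LinearMap.range_eq_top]
    intro c
    refine ⟨(c / f v₀) • v₀, ?_⟩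
    rw [_root_.map_smul, smul_eq_mul, div_mul_cancel₀ _ hv₀]
  have h1 := LinearMap.finrank_range_add_finrank_ker f
  rw [hsurj, finrank_top, Module.finrank_self, e.finrank_eq] at h1
  omega

private lemma border_up {m : ℕ} (B : Matrix (Fin m) (Fin m) ℝ)
    (B' : Matrix (Fin (m + 1)) (Fin (m + 1)) ℝ) (hB' : B'.IsSymm)
    (hb : ∀ i j : Fin m, B' i.succ j.succ = B i j) (t : ℝ)
    (u : Fin (m + 1) → ℝ) (hu : (B' - t • 1) *ᵥ u = 0) (hu0 : u 0 ≠ 0) :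
    eigMult B' t = eigMult B t + 1 := by
  classical
  set M : Matrix (Fin m) (Fin m) ℝ := B - t • 1 with hM
  set M' : Matrix (Fin (m + 1)) (Fin (m + 1)) ℝ := B' - t • 1 with hM'
  have hMs : ∀ i j : Fin m, M' i.succ j.succ = M i j := by
    intro i j
    simp [hM, hM', Matrix.sub_apply, Matrix.smul_apply, Matrix.one_apply, Fin.succ_inj, hb i j]
  have hMsym : M'ᵀ = M' := by
    rw [hM', Matrix.transpose_sub, Matrix.transpose_smul, Matrix.transpose_one, hB']
  have hrow : ∀ (v : Fin (m + 1) → ℝ), v 0 = 0 → ∀ i : Fin m,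
      (M' *ᵥ v) i.succ = (M *ᵥ (fun j => v j.succ)) i := by
    intro v h0 i
    simp only [Matrix.mulVec, dotProduct]
    rw [Fin.sum_univ_succ, h0, mul_zero, zero_add]
    exact Finset.sum_congr rfl fun j _ => by rw [hMs]
  have hdot : ∀ v : Fin (m + 1) → ℝ, u ⬝ᵥ (M' *ᵥ v) = 0 := by
    intro v
    rw [Matrix.dotProduct_mulVec, ← Matrix.mulVec_transpose, hMsym, hu, zero_dotProduct]
  have hu' : u ∈ LinearMap.ker (Matrix.toLin' M') := by
    rw [LinearMap.mem_ker, Matrix.toLin'_apply, hu]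
  set f : LinearMap.ker (Matrix.toLin' M') →ₗ[ℝ] ℝ :=
    (LinearMap.proj 0).comp (LinearMap.ker (Matrix.toLin' M')).subtype with hf
  set g₀ : LinearMap.ker f →ₗ[ℝ] (Fin m → ℝ) :=
    (LinearMap.funLeft ℝ ℝ Fin.succ).comp
      ((LinearMap.ker (Matrix.toLin' M')).subtype.comp (LinearMap.ker f).subtype) with hg₀
  have hx0 : ∀ x : LinearMap.ker f, ((x : LinearMap.ker (Matrix.toLin' M')) : Fin (m + 1) → ℝ) 0 = 0 := by
    intro x
    exact x.2
  have hxker : ∀ x : LinearMap.ker f,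
      M' *ᵥ ((x : LinearMap.ker (Matrix.toLin' M')) : Fin (m + 1) → ℝ) = 0 := by
    intro x
    have := (x : LinearMap.ker (Matrix.toLin' M')).2
    rwa [LinearMap.mem_ker, Matrix.toLin'_apply] at this
  have hmem : ∀ x : LinearMap.ker f, g₀ x ∈ LinearMap.ker (Matrix.toLin' M) := by
    intro x
    rw [LinearMap.mem_ker, Matrix.toLin'_apply]
    funext i
    have h1 := hrow _ (hx0 x) i
    rw [hxker x] at h1
    simpa [hg₀, LinearMap.funLeft, Function.comp_def] using h1.symm
  set g : LinearMap.ker f →ₗ[ℝ] LinearMap.ker (Matrix.toLin' M) :=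
    LinearMap.codRestrict _ g₀ hmem with hg
  have hinj : Function.Injective g := by
    intro x y hxy
    have h : g₀ x = g₀ y := congrArg Subtype.val hxy
    apply Subtype.ext
    apply Subtype.ext
    funext j
    refine Fin.cases ?_ (fun i => ?_) j
    · rw [hx0 x, hx0 y]
    · exact congrFun h i
  have hsurj : Function.Surjective g := by
    rintro ⟨y, hy⟩
    rw [LinearMap.mem_ker, Matrix.toLin'_apply] at hy
    set v : Fin (m + 1) → ℝ := Fin.cons 0 y with hv
    have hv0 : v 0 = 0 := rfl
    have hvsucc : ∀ i : Fin m, (M' *ᵥ v) i.succ = 0 := by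
      intro i
      rw [hrow v hv0 i]
      have : (fun j => v j.succ) = y := by funext j; simp [hv]
      rw [this, hy]
      rfl
    have hvrow0 : (M' *ᵥ v) 0 = 0 := by
      have hd := hdot v
      rw [show u ⬝ᵥ (M' *ᵥ v) = ∑ i, u i * (M' *ᵥ v) i from rfl, Fin.sum_univ_succ] at hd
      simp only [hvsucc, mul_zero, Finset.sum_const_zero, add_zero] at hd
      exact by
        have := mul_eq_zero.mp hd
        tauto
    have hvker : M' *ᵥ v = 0 := by
      funext j
      refine Fin.cases hvrow0 (fun i => hvsucc i) j
    have hvmem : v ∈ LinearMap.ker (Matrix.toLin' M') := by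
      rw [LinearMap.mem_ker, Matrix.toLin'_apply, hvker]
    have hvf : (⟨v, hvmem⟩ : LinearMap.ker (Matrix.toLin' M')) ∈ LinearMap.ker f := by
      rw [LinearMap.mem_ker]
      simpa [hf] using hv0
    refine ⟨⟨⟨v, hvmem⟩, hvf⟩, ?_⟩
    apply Subtype.ext
    funext j
    simp [hg, hg₀, LinearMap.funLeft, hv]
  have e : LinearMap.ker f ≃ₗ[ℝ] LinearMap.ker (Matrix.toLin' M) :=
    LinearEquiv.ofBijective g ⟨hinj, hsurj⟩
  have := finrank_eq_of_functional f ⟨u, hu'⟩ (by simpa [hf] using hu0) e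
  simpa [eigMult, hM, hM'] using this

private lemma border_down {m : ℕ} (B' : Matrix (Fin (m + 1)) (Fin (m + 1)) ℝ)
    (B'' : Matrix (Fin (m + 2)) (Fin (m + 2)) ℝ) (hB'' : B''.IsSymm)
    (hb : ∀ i j : Fin (m + 1), B'' i.succ j.succ = B' i j) (t : ℝ)
    (u : Fin (m + 1) → ℝ) (hu : (B' - t • 1) *ᵥ u = 0)
    (hw : ∑ j, B'' 0 j.succ * u j ≠ 0) :
    eigMult B' t = eigMult B'' t + 1 := by
  classical
  set M' : Matrix (Fin (m + 1)) (Fin (m + 1)) ℝ := B' - t • 1 with hM'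
  set M'' : Matrix (Fin (m + 2)) (Fin (m + 2)) ℝ := B'' - t • 1 with hM''
  have hMs : ∀ i j : Fin (m + 1), M'' i.succ j.succ = M' i j := by
    intro i j
    simp [hM', hM'', Matrix.sub_apply, Matrix.smul_apply, Matrix.one_apply, Fin.succ_inj, hb i j]
  have hM0 : ∀ j : Fin (m + 1), M'' 0 j.succ = B'' 0 j.succ := by
    intro j
    simp [hM'', Matrix.sub_apply, Matrix.smul_apply, Matrix.one_apply, (Fin.succ_ne_zero j).symm]
  have hMsym : M''ᵀ = M'' := by
    rw [hM'', Matrix.transpose_sub, Matrix.transpose_smul, Matrix.transpose_one, hB'']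
  have hrow : ∀ (v : Fin (m + 2) → ℝ), v 0 = 0 → ∀ i : Fin (m + 1),
      (M'' *ᵥ v) i.succ = (M' *ᵥ (fun j => v j.succ)) i := by
    intro v h0 i
    simp only [Matrix.mulVec, dotProduct]
    rw [Fin.sum_univ_succ, h0, mul_zero, zero_add]
    exact Finset.sum_congr rfl fun j _ => by rw [hMs]
  have hrow0 : ∀ (v : Fin (m + 2) → ℝ), v 0 = 0 →
      (M'' *ᵥ v) 0 = ∑ j : Fin (m + 1), B'' 0 j.succ * v j.succ := by
    intro v h0
    simp only [Matrix.mulVec, dotProduct]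
    rw [Fin.sum_univ_succ, h0, mul_zero, zero_add]
    exact Finset.sum_congr rfl fun j _ => by rw [hM0]
  -- the extended vector
  set uh : Fin (m + 2) → ℝ := Fin.cons 0 u with huh
  have huh0 : uh 0 = 0 := rfl
  have huhsucc : ∀ i : Fin (m + 1), (M'' *ᵥ uh) i.succ = 0 := by
    intro i
    rw [hrow uh huh0 i]
    have : (fun j => uh j.succ) = u := by funext j; simp [huh]
    rw [this, hu]
    rfl
  have huhrow0 : (M'' *ᵥ uh) 0 = ∑ j, B'' 0 j.succ * u j := by
    rw [hrow0 uh huh0]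
    exact Finset.sum_congr rfl fun j _ => by simp [huh]
  -- Claim 1: every kernel vector of M'' has first coordinate 0
  have hclaim : ∀ v : Fin (m + 2) → ℝ, M'' *ᵥ v = 0 → v 0 = 0 := by
    intro v hv
    have hd : uh ⬝ᵥ (M'' *ᵥ v) = (M'' *ᵥ uh) ⬝ᵥ v := by
      rw [Matrix.dotProduct_mulVec, ← Matrix.mulVec_transpose, hMsym]
    rw [hv, dotProduct_zero] at hd
    rw [show (M'' *ᵥ uh) ⬝ᵥ v = ∑ i, (M'' *ᵥ uh) i * v i from rfl, Fin.sum_univ_succ] at hd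
    simp only [huhsucc, zero_mul, Finset.sum_const_zero, add_zero, huhrow0] at hd
    have := mul_eq_zero.mp hd.symm
    tauto
  have hu' : u ∈ LinearMap.ker (Matrix.toLin' M') := by
    rw [LinearMap.mem_ker, Matrix.toLin'_apply, hu]
  -- the functional on ker M'
  set w : Fin (m + 1) → ℝ := fun j => B'' 0 j.succ with hwdef
  set wdot : (Fin (m + 1) → ℝ) →ₗ[ℝ] ℝ :=
    { toFun := fun x => w ⬝ᵥ x
      map_add' := fun x y => dotProduct_add w x y
      map_smul' := fun c x => by simp [dotProduct, Finset.mul_sum, mul_comm, mul_left_comm, mul_assoc] } with hwdot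
  set ψ : LinearMap.ker (Matrix.toLin' M') →ₗ[ℝ] ℝ :=
    wdot.comp (LinearMap.ker (Matrix.toLin' M')).subtype with hψ
  have hψu : ψ ⟨u, hu'⟩ ≠ 0 := by
    simpa [hψ, hwdot, hwdef, dotProduct] using hw
  -- the map from ker M'' to ker ψ
  set θ₀ : LinearMap.ker (Matrix.toLin' M'') →ₗ[ℝ] (Fin (m + 1) → ℝ) :=
    (LinearMap.funLeft ℝ ℝ Fin.succ).comp (LinearMap.ker (Matrix.toLin' M'')).subtype with hθ₀
  have hxker : ∀ x : LinearMap.ker (Matrix.toLin' M''), M'' *ᵥ (x : Fin (m + 2) → ℝ) = 0 := by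
    intro x
    have := x.2
    rwa [LinearMap.mem_ker, Matrix.toLin'_apply] at this
  have hx0 : ∀ x : LinearMap.ker (Matrix.toLin' M''), (x : Fin (m + 2) → ℝ) 0 = 0 :=
    fun x => hclaim _ (hxker x)
  have hmem1 : ∀ x : LinearMap.ker (Matrix.toLin' M''), θ₀ x ∈ LinearMap.ker (Matrix.toLin' M') := by
    intro x
    rw [LinearMap.mem_ker, Matrix.toLin'_apply]
    funext i
    have h1 := hrow _ (hx0 x) i
    rw [hxker x] at h1
    simpa [hθ₀, LinearMap.funLeft, Function.comp_def] using h1.symm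
  set θ₁ : LinearMap.ker (Matrix.toLin' M'') →ₗ[ℝ] LinearMap.ker (Matrix.toLin' M') :=
    LinearMap.codRestrict _ θ₀ hmem1 with hθ₁
  have hmem2 : ∀ x : LinearMap.ker (Matrix.toLin' M''), θ₁ x ∈ LinearMap.ker ψ := by
    intro x
    rw [LinearMap.mem_ker]
    have h1 := hrow0 _ (hx0 x)
    rw [hxker x] at h1
    have : ψ (θ₁ x) = ∑ j : Fin (m + 1), B'' 0 j.succ * (x : Fin (m + 2) → ℝ) j.succ := by
      simp [hψ, hθ₁, hθ₀, hwdot, hwdef, dotProduct, LinearMap.funLeft]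
    rw [this, ← h1]
    rfl
  set θ : LinearMap.ker (Matrix.toLin' M'') →ₗ[ℝ] LinearMap.ker ψ :=
    LinearMap.codRestrict _ θ₁ hmem2 with hθ
  have hinj : Function.Injective θ := by
    intro x y hxy
    have h : θ₀ x = θ₀ y := congrArg (Subtype.val ∘ Subtype.val) hxy
    apply Subtype.ext
    funext j
    refine Fin.cases ?_ (fun i => ?_) j
    · rw [hx0 x, hx0 y]
    · exact congrFun h i
  have hsurj : Function.Surjective θ := by
    rintro ⟨⟨y, hy⟩, hyψ⟩
    rw [LinearMap.mem_ker, Matrix.toLin'_apply] at hy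
    rw [LinearMap.mem_ker] at hyψ
    have hyw : ∑ j, B'' 0 j.succ * y j = 0 := by
      simpa [hψ, hwdot, hwdef, dotProduct] using hyψ
    set v : Fin (m + 2) → ℝ := Fin.cons 0 y with hv
    have hv0 : v 0 = 0 := rfl
    have hvtail : (fun j => v j.succ) = y := by funext j; simp [hv]
    have hvsucc : ∀ i : Fin (m + 1), (M'' *ᵥ v) i.succ = 0 := by
      intro i
      rw [hrow v hv0 i, hvtail, hy]
      rfl
    have hvrow0 : (M'' *ᵥ v) 0 = 0 := by
      rw [hrow0 v hv0]
      rw [show (∑ j : Fin (m + 1), B'' 0 j.succ * v j.succ) = ∑ j : Fin (m + 1), B'' 0 j.succ * y j from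
        Finset.sum_congr rfl fun j _ => by rw [congrFun hvtail j]]
      exact hyw
    have hvker : M'' *ᵥ v = 0 := by
      funext j
      refine Fin.cases hvrow0 (fun i => hvsucc i) j
    have hvmem : v ∈ LinearMap.ker (Matrix.toLin' M'') := by
      rw [LinearMap.mem_ker, Matrix.toLin'_apply, hvker]
    refine ⟨⟨v, hvmem⟩, ?_⟩
    apply Subtype.ext
    apply Subtype.ext
    funext j
    simp [hθ, hθ₁, hθ₀, LinearMap.funLeft, hv]
  have e : LinearMap.ker ψ ≃ₗ[ℝ] LinearMap.ker (Matrix.toLin' M'') :=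
    (LinearEquiv.ofBijective θ ⟨hinj, hsurj⟩).symm
  have := finrank_eq_of_functional ψ ⟨u, hu'⟩ hψu e
  simpa [eigMult, hM', hM''] using this


/-- Let `A'` be a `1`-bordering of the symmetric matrix `A` and `A''` a `1`-bordering of
`A'`.  If the `(1,2)` entry of `A''` is nonzero, then there is a real number `t` with
`m_{A''}(t) = m_{A'}(t) - 1 = m_A(t)`. -/
theorem stmt16 {n : ℕ} (A : Matrix (Fin n) (Fin n) ℝ)
    (A' : Matrix (Fin (n + 1)) (Fin (n + 1)) ℝ)
    (A'' : Matrix (Fin (n + 2)) (Fin (n + 2)) ℝ)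
    (hA : A.IsSymm) (hA' : A'.IsSymm) (hA'' : A''.IsSymm)
    (hb1 : ∀ i j : Fin n, A' i.succ j.succ = A i j)
    (hb2 : ∀ i j : Fin (n + 1), A'' i.succ j.succ = A' i j)
    (h12 : A'' 0 1 ≠ 0) :
    ∃ t : ℝ, eigMult A' t = eigMult A'' t + 1 ∧ eigMult A'' t = eigMult A t := by
  classical
  have hH : A'.IsHermitian := by
    rw [Matrix.IsHermitian, Matrix.conjTranspose_eq_transpose_of_trivial]
    exact hA'
  set b := hH.eigenvectorBasis with hbdef
  set w : EuclideanSpace ℝ (Fin (n + 1)) := WithLp.toLp 2 (fun j => A'' 0 j.succ : Fin (n + 1) → ℝ) with hwdef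
  set e₀ : EuclideanSpace ℝ (Fin (n + 1)) := EuclideanSpace.single (0 : Fin (n + 1)) (1 : ℝ) with he₀
  have hpar := b.sum_inner_mul_inner e₀ w
  have hrhs : (inner ℝ e₀ w : ℝ) = A'' 0 1 := by
    rw [he₀, EuclideanSpace.inner_single_left]
    simp [hwdef, Fin.succ_zero_eq_one]
  have hex : ∃ i, (inner ℝ e₀ (b i) : ℝ) * (inner ℝ (b i) w : ℝ) ≠ 0 := by
    by_contra h
    push_neg at h
    rw [Finset.sum_eq_zero (fun i _ => h i), hrhs] at hpar
    exact h12 hpar.symm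
  obtain ⟨i, hi⟩ := hex
  obtain ⟨hi1, hi2⟩ := mul_ne_zero_iff.mp hi
  set t := hH.eigenvalues i with ht
  set u : Fin (n + 1) → ℝ := ⇑(b i) with hudef
  have hu : (A' - t • 1) *ᵥ u = 0 := by
    rw [Matrix.sub_mulVec, Matrix.smul_mulVec, Matrix.one_mulVec,
      hH.mulVec_eigenvectorBasis i, sub_self]
  have hu0 : u 0 ≠ 0 := by
    rw [he₀, EuclideanSpace.inner_single_left] at hi1
    simpa [hudef] using hi1
  have hwu : ∑ j, A'' 0 j.succ * u j ≠ 0 := by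
    have : (inner ℝ (b i) w : ℝ) = ∑ j, u j * A'' 0 j.succ := by
      rw [PiLp.inner_apply]
      exact Finset.sum_congr rfl fun j _ => by simp [hwdef, hudef, mul_comm]
    rw [this] at hi2
    rw [show (∑ j, A'' 0 j.succ * u j) = ∑ j, u j * A'' 0 j.succ from
      Finset.sum_congr rfl fun j _ => mul_comm _ _]
    exact hi2
  have h1 := border_up A A' hA' hb1 t u hu hu0
  have h2 := border_down A' A'' hA'' hb2 t u hu hwu
  exact ⟨t, h2, by omega⟩
end

section
/- Suppose t ≥ 2, k ≥ t, and A is a real symmetric matrix with ordered multiplicity list (m_1, k, m_2, k, …, k, m_t) where m_i ≥ k for each i. Then every k-bordering B of A that has exactly t distinct eigenvalues and arises as the end of a chain of successive 1-borderings of A is a matrix whose leading k×k principal block has all off-diagonal entries under every simultaneous permutation constraint equal to zero; in particular, no such B can lie in S(G ∨ G(A)) for any non-empty graph G on k vertices, so q(G ∨ A) > t even though C(m(A), t) = k. -/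
open Matrix

/-- `Cval k t m`: the min-max gap multiplicity of the list `m` with `t` gap boundaries. -/
noncomputable def Cval (k t : ℕ) (m : Fin k → ℕ) : ℕ :=
  sInf { r : ℕ | ∃ p : Fin t → Fin k, Monotone p ∧
    (∀ i : Fin t, (i.val = 0 → (p i).val = 0) ∧ (i.val = t - 1 → (p i).val = k - 1)) ∧
    r = Finset.univ.sup (fun i : Fin t =>
      if h : i.val + 1 < t then
        ∑ j ∈ Finset.Ioo (p i) (p ⟨i.val + 1, h⟩), m j
      else 0) }

variable {N : ℕ} {M : Matrix (Fin N) (Fin N) ℝ}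

lemma isHermitian_of_isSymm (h : M.IsSymm) : M.IsHermitian := by
  unfold Matrix.IsHermitian
  rw [Matrix.conjTranspose_eq_transpose_of_trivial]; exact h

lemma aux_sub (hM : M.IsHermitian) (θ : ℝ) :
    M - θ • 1 = (hM.eigenvectorUnitary : Matrix (Fin N) (Fin N) ℝ) *
      Matrix.diagonal (fun i => hM.eigenvalues i - θ) *
      star (hM.eigenvectorUnitary : Matrix (Fin N) (Fin N) ℝ) := by
  set U := (hM.eigenvectorUnitary : Matrix (Fin N) (Fin N) ℝ) with hU
  have h1 : U * star U = 1 := (Unitary.mem_iff.mp hM.eigenvectorUnitary.2).2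
  have h2 : M = U * Matrix.diagonal (hM.eigenvalues) * star U := by
    have := hM.spectral_theorem
    simpa using this
  calc M - θ • 1 = U * Matrix.diagonal hM.eigenvalues * star U - U * (θ • 1) * star U := by
        rw [← h2]
        congr 1
        rw [Matrix.mul_smul, Matrix.smul_mul, mul_one, h1]
    _ = U * (Matrix.diagonal hM.eigenvalues - θ • 1) * star U := by
        rw [← Matrix.sub_mul, ← Matrix.mul_sub]
    _ = _ := by
        rw [Matrix.smul_one_eq_diagonal, Matrix.diagonal_sub]

lemma isUnit_det_unitary (hM : M.IsHermitian) :
    IsUnit ((hM.eigenvectorUnitary : Matrix (Fin N) (Fin N) ℝ)).det ∧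
    IsUnit (star (hM.eigenvectorUnitary : Matrix (Fin N) (Fin N) ℝ)).det := by
  set U := (hM.eigenvectorUnitary : Matrix (Fin N) (Fin N) ℝ)
  have h1 : U * star U = 1 := (Unitary.mem_iff.mp hM.eigenvectorUnitary.2).2
  have hd : U.det * (star U).det = 1 := by rw [← Matrix.det_mul, h1, Matrix.det_one]
  exact ⟨IsUnit.of_mul_eq_one _ hd, IsUnit.of_mul_eq_one _ (by rwa [mul_comm] at hd)⟩

lemma rank_sub_eq (hM : M.IsHermitian) (θ : ℝ) :
    (M - θ • 1).rank = Fintype.card {i // hM.eigenvalues i ≠ θ} := by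
  rw [aux_sub hM θ]
  rw [Matrix.rank_mul_eq_left_of_isUnit_det _ _ (isUnit_det_unitary hM).2,
    Matrix.rank_mul_eq_right_of_isUnit_det _ _ (isUnit_det_unitary hM).1,
    Matrix.rank_diagonal]
  apply Fintype.card_congr
  apply Equiv.subtypeEquivRight
  intro i
  rw [sub_ne_zero]

lemma eigMult_eq_card (hM : M.IsHermitian) (θ : ℝ) :
    eigMult M θ = (Finset.univ.filter (fun i => hM.eigenvalues i = θ)).card := by
  have hrk : (M - θ • 1).rank + eigMult M θ = N := by
    have := LinearMap.finrank_range_add_finrank_ker (Matrix.toLin' (M - θ • 1))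
    rw [Module.finrank_fintype_fun_eq_card, Fintype.card_fin] at this
    rw [Matrix.rank, ← Matrix.toLin'_apply']
    exact this
  have h2 := rank_sub_eq hM θ
  have h3 := Finset.card_filter_add_card_filter_not
    (s := (Finset.univ : Finset (Fin N))) (p := fun i => hM.eigenvalues i = θ)
  rw [Finset.card_univ, Fintype.card_fin] at h3
  have h4 : Fintype.card {i // hM.eigenvalues i ≠ θ} =
      (Finset.univ.filter (fun i => ¬ hM.eigenvalues i = θ)).card := by
    rw [Fintype.card_subtype]
  omega

lemma spectrum_eq_range (hM : M.IsHermitian) :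
    spectrum ℝ M = Set.range hM.eigenvalues := by
  ext θ
  constructor
  · intro hθ
    by_contra hr
    apply spectrum.mem_iff.mp hθ
    have : (algebraMap ℝ (Matrix (Fin N) (Fin N) ℝ)) θ - M =
        (hM.eigenvectorUnitary : Matrix (Fin N) (Fin N) ℝ) *
        Matrix.diagonal (fun i => θ - hM.eigenvalues i) *
        star (hM.eigenvectorUnitary : Matrix (Fin N) (Fin N) ℝ) := by
      have := aux_sub hM θ
      have h' : (algebraMap ℝ (Matrix (Fin N) (Fin N) ℝ)) θ - M = -(M - θ • 1) := by
        rw [Algebra.algebraMap_eq_smul_one]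
        abel
      rw [h', this]
      have hd : -(Matrix.diagonal (fun i => hM.eigenvalues i - θ)) =
          Matrix.diagonal (fun i => θ - hM.eigenvalues i) := by
        ext i j
        by_cases h : i = j <;> simp [Matrix.diagonal, h] <;> ring
      rw [← hd]
      rw [Matrix.mul_neg, Matrix.neg_mul]
    rw [this, Matrix.isUnit_iff_isUnit_det]
    rw [Matrix.det_mul, Matrix.det_mul]
    apply IsUnit.mul
    apply IsUnit.mul (isUnit_det_unitary hM).1
    · rw [Matrix.det_diagonal]
      rw [isUnit_iff_ne_zero]
      apply Finset.prod_ne_zero_iff.mpr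
      intro i _
      rw [sub_ne_zero]
      intro hc
      exact hr ⟨i, hc.symm⟩
    · exact (isUnit_det_unitary hM).2
  · rintro ⟨i, rfl⟩
    exact hM.eigenvalues_mem_spectrum_real i

lemma sum_eigMult (hM : M.IsHermitian) :
    ∑ θ ∈ Finset.image hM.eigenvalues Finset.univ, eigMult M θ = N := by
  have h := Finset.card_eq_sum_card_image hM.eigenvalues Finset.univ
  rw [Finset.card_univ, Fintype.card_fin] at h
  calc ∑ θ ∈ Finset.image hM.eigenvalues Finset.univ, eigMult M θ
      = ∑ θ ∈ Finset.image hM.eigenvalues Finset.univ,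
        (Finset.univ.filter (fun i => hM.eigenvalues i = θ)).card :=
        Finset.sum_congr rfl (fun θ _ => eigMult_eq_card hM θ)
    _ = N := h.symm

lemma eigMult_eq_zero (hM : M.IsHermitian) {θ : ℝ} (h : θ ∉ spectrum ℝ M) :
    eigMult M θ = 0 := by
  rw [eigMult_eq_card hM θ, Finset.card_eq_zero]
  rw [Finset.filter_eq_empty_iff]
  intro i _
  intro hc
  exact h (by rw [spectrum_eq_range hM]; exact ⟨i, hc⟩)

lemma mem_eigKer {N : ℕ} (M : Matrix (Fin N) (Fin N) ℝ) (θ : ℝ) (x : Fin N → ℝ) :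
    x ∈ LinearMap.ker (Matrix.toLin' (M - θ • 1)) ↔ M *ᵥ x = θ • x := by
  rw [LinearMap.mem_ker, Matrix.toLin'_apply, Matrix.sub_mulVec, Matrix.smul_mulVec,
    Matrix.one_mulVec, sub_eq_zero]

lemma castAdd_ne_natAdd {k n : ℕ} (a : Fin k) (z : Fin n) :
    (Fin.castAdd n a : Fin (k+n)) ≠ Fin.natAdd k z := by
  intro h
  have := congrArg Fin.val h
  simp only [Fin.coe_castAdd, Fin.coe_natAdd] at this
  omega

lemma bordering_key {k n : ℕ} (B : Matrix (Fin (k+n)) (Fin (k+n)) ℝ)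
    (A : Matrix (Fin n) (Fin n) ℝ)
    (hBA : ∀ i j, B (Fin.natAdd k i) (Fin.natAdd k j) = A i j) (θ : ℝ) :
    eigMult B θ ≤ k + eigMult A θ ∧
    (eigMult B θ = k + eigMult A θ →
      ((∀ y : Fin n → ℝ, A *ᵥ y = θ • y →
         ∀ a : Fin k, ∑ z, B (Fin.castAdd n a) (Fin.natAdd k z) * y z = 0) ∧
       (∀ u : Fin k → ℝ, ∃ x : Fin (k+n) → ℝ,
         B *ᵥ x = θ • x ∧ ∀ a, x (Fin.castAdd n a) = u a))) := by
  classical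
  set K := LinearMap.ker (Matrix.toLin' (B - θ • (1 : Matrix (Fin (k+n)) (Fin (k+n)) ℝ))) with hK
  set ρ : K →ₗ[ℝ] (Fin k → ℝ) := (LinearMap.funLeft ℝ ℝ (Fin.castAdd n)).comp K.subtype with hρ
  have hbot : ∀ x : Fin (k+n) → ℝ, x ∈ K → (∀ a : Fin k, x (Fin.castAdd n a) = 0) →
      A *ᵥ (fun j => x (Fin.natAdd k j)) = θ • (fun j => x (Fin.natAdd k j)) := by
    intro x hx htop
    have hx' := (mem_eigKer _ _ _).mp hx
    funext i
    have hrow := congrFun hx' (Fin.natAdd k i)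
    simp only [Matrix.mulVec, dotProduct, Pi.smul_apply, smul_eq_mul] at hrow
    rw [Fin.sum_univ_add] at hrow
    simp only [htop, mul_zero, Finset.sum_const_zero, zero_add, hBA] at hrow
    simpa [Matrix.mulVec, dotProduct] using hrow
  set τ1 : (LinearMap.ker ρ) →ₗ[ℝ] (Fin n → ℝ) :=
    ((LinearMap.funLeft ℝ ℝ (Fin.natAdd k)).comp K.subtype).comp (LinearMap.ker ρ).subtype
    with hτ1
  have hτval : ∀ z : LinearMap.ker ρ, τ1 z = fun j => (z.1.1 : Fin (k+n) → ℝ) (Fin.natAdd k j) :=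
    fun z => rfl
  have htopz : ∀ z : LinearMap.ker ρ, ∀ a : Fin k, (z.1.1 : Fin (k+n) → ℝ) (Fin.castAdd n a) = 0 :=
    fun z a => congrFun (LinearMap.mem_ker.mp z.2) a
  have hτmem : ∀ z : LinearMap.ker ρ, τ1 z ∈ LinearMap.ker (Matrix.toLin'
      (A - θ • (1 : Matrix (Fin n) (Fin n) ℝ))) := by
    intro z
    rw [hτval, mem_eigKer]
    exact hbot _ z.1.2 (htopz z)
  set σ := τ1.codRestrict _ hτmem with hσ
  have hσinj : Function.Injective σ := by
    intro z w hzw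
    have h1 : τ1 z = τ1 w := congrArg Subtype.val hzw
    apply Subtype.ext; apply Subtype.ext
    funext l
    induction l using Fin.addCases with
    | left a => rw [htopz z a, htopz w a]
    | right j => exact congrFun h1 j
  have hker_le : Module.finrank ℝ (LinearMap.ker ρ) ≤ eigMult A θ :=
    LinearMap.finrank_le_finrank_of_injective hσinj
  have hrange_le : Module.finrank ℝ (LinearMap.range ρ) ≤ k := by
    have := Submodule.finrank_le (LinearMap.range ρ)
    rwa [Module.finrank_fintype_fun_eq_card, Fintype.card_fin] at this
  have hsum : Module.finrank ℝ (LinearMap.range ρ) + Module.finrank ℝ (LinearMap.ker ρ)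
      = eigMult B θ := LinearMap.finrank_range_add_finrank_ker ρ
  constructor
  · omega
  · intro heq
    have hr : Module.finrank ℝ (LinearMap.range ρ) = k := by omega
    have hk2 : Module.finrank ℝ (LinearMap.ker ρ) = eigMult A θ := by omega
    constructor
    · -- X kills eigenvectors of A
      intro y hy a
      have hσsurj : Function.Surjective σ :=
        (LinearMap.injective_iff_surjective_of_finrank_eq_finrank (K := ℝ) (V := LinearMap.ker ρ)
          (V₂ := LinearMap.ker (Matrix.toLin' (A - θ • (1 : Matrix (Fin n) (Fin n) ℝ)))) (f := σ) hk2).mp hσinj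
      obtain ⟨z, hz⟩ := hσsurj ⟨y, (mem_eigKer _ _ _).mpr hy⟩
      have hyz : τ1 z = y := congrArg Subtype.val hz
      have hx' := (mem_eigKer _ _ _).mp z.1.2
      have hrow := congrFun hx' (Fin.castAdd n a)
      simp only [Matrix.mulVec, dotProduct, Pi.smul_apply, smul_eq_mul] at hrow
      rw [Fin.sum_univ_add] at hrow
      simp only [htopz z, mul_zero, Finset.sum_const_zero, zero_add] at hrow
      calc ∑ z', B (Fin.castAdd n a) (Fin.natAdd k z') * y z'
          = ∑ z', B (Fin.castAdd n a) (Fin.natAdd k z') * (z.1.1 : Fin (k+n) → ℝ)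
            (Fin.natAdd k z') := by
            apply Finset.sum_congr rfl
            intro z' _
            rw [← hyz, hτval]
        _ = 0 := hrow
    · intro u
      have htop : LinearMap.range ρ = ⊤ := by
        apply Submodule.eq_top_of_finrank_eq
        rw [hr, Module.finrank_fintype_fun_eq_card, Fintype.card_fin]
      have hu : u ∈ LinearMap.range ρ := htop ▸ Submodule.mem_top
      obtain ⟨x, hx⟩ := hu
      exact ⟨x.1, (mem_eigKer _ _ _).mp x.2, fun a => congrFun hx a⟩

lemma bordering_count {n t k : ℕ} (ht : 2 ≤ t) (hkt : t ≤ k)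
    (A : Matrix (Fin n) (Fin n) ℝ) (hA : A.IsSymm)
    (μ : Fin (2 * t - 1) → ℝ) (hμ : StrictMono μ)
    (hspec : spectrum ℝ A = Set.range μ)
    (hge : ∀ i, k ≤ eigMult A (μ i))
    (B : Matrix (Fin (k + n)) (Fin (k + n)) ℝ) (hB : B.IsSymm)
    (hBA : ∀ i j, B (Fin.natAdd k i) (Fin.natAdd k j) = A i j) :
    t ≤ (spectrum ℝ B).ncard ∧
    ((spectrum ℝ B).ncard = t →
      spectrum ℝ B ⊆ spectrum ℝ A ∧
      ∀ θ ∈ spectrum ℝ B, eigMult B θ = k + eigMult A θ) := by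
  classical
  have hA' := isHermitian_of_isSymm hA
  have hB' := isHermitian_of_isSymm hB
  set SA := Finset.image hA'.eigenvalues Finset.univ with hSAdef
  set SB := Finset.image hB'.eigenvalues Finset.univ with hSBdef
  have hSA : (SA : Set ℝ) = spectrum ℝ A := by
    rw [spectrum_eq_range hA', hSAdef, Finset.coe_image, Finset.coe_univ, Set.image_univ]
  have hSB : (SB : Set ℝ) = spectrum ℝ B := by
    rw [spectrum_eq_range hB', hSBdef, Finset.coe_image, Finset.coe_univ, Set.image_univ]
  have hncard : (spectrum ℝ B).ncard = SB.card := by rw [← hSB, Set.ncard_coe_finset]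
  have hSAμ : SA = Finset.image μ Finset.univ := by
    apply Finset.coe_injective
    rw [hSA, hspec, Finset.coe_image, Finset.coe_univ, Set.image_univ]
  have hSAcard : SA.card = 2 * t - 1 := by
    rw [hSAμ, Finset.card_image_of_injective _ hμ.injective, Finset.card_univ, Fintype.card_fin]
  have hgeSA : ∀ θ ∈ SA, k ≤ eigMult A θ := by
    intro θ hθ
    rw [hSAμ] at hθ
    obtain ⟨i, _, rfl⟩ := Finset.mem_image.mp hθ
    exact hge i
  have hsumA : ∑ θ ∈ SA, eigMult A θ = n := sum_eigMult hA'
  have hsumB : ∑ θ ∈ SB, eigMult B θ = k + n := sum_eigMult hB'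
  have hle : ∀ θ, eigMult B θ ≤ k + eigMult A θ := fun θ => (bordering_key B A hBA θ).1
  -- arithmetic setup
  set c := SB.card with hc
  set s := (SB ∩ SA).card with hs
  set a := ∑ θ ∈ SB ∩ SA, eigMult A θ with ha
  set b := ∑ θ ∈ SA \ SB, eigMult A θ with hb
  have hzero : ∀ θ ∈ SB \ SA, eigMult A θ = 0 := by
    intro θ hθ
    apply eigMult_eq_zero hA'
    rw [← hSA]
    exact fun hcon => (Finset.mem_sdiff.mp hθ).2 hcon
  have hSBsum : ∑ θ ∈ SB, eigMult A θ = a := by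
    rw [ha]
    rw [← Finset.sum_inter_add_sum_sdiff SB SA (eigMult A)]
    rw [Finset.sum_eq_zero hzero, add_zero]
  have hab : a + b = n := by
    have hsplit := Finset.sum_inter_add_sum_sdiff SA SB (eigMult A)
    rw [hsumA] at hsplit
    rw [ha, hb, Finset.inter_comm SB SA]
    exact hsplit
  have hcard_diff : (SA \ SB).card + s = 2 * t - 1 := by
    have := Finset.card_sdiff_add_card_inter SA SB
    rw [hSAcard] at this
    rw [hs, Finset.inter_comm]
    exact this
  have hbge : (SA \ SB).card * k ≤ b := by
    rw [hb]
    calc (SA \ SB).card * k = ∑ _θ ∈ SA \ SB, k := by rw [Finset.sum_const, smul_eq_mul]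
      _ ≤ ∑ θ ∈ SA \ SB, eigMult A θ :=
        Finset.sum_le_sum (fun θ hθ => hgeSA θ (Finset.mem_sdiff.mp hθ).1)
  have hsc : s ≤ c := Finset.card_le_card Finset.inter_subset_left
  have hst : s ≤ 2 * t - 1 := by omega
  have hkpos : 0 < k := by omega
  have key : k + b ≤ c * k := by
    have h1 : k + n ≤ c * k + a := by
      calc k + n = ∑ θ ∈ SB, eigMult B θ := hsumB.symm
        _ ≤ ∑ θ ∈ SB, (k + eigMult A θ) := Finset.sum_le_sum (fun θ _ => hle θ)
        _ = c * k + a := by rw [Finset.sum_add_distrib, Finset.sum_const, smul_eq_mul, hSBsum]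
    omega
  have key2 : (2 * t - s) * k ≤ c * k := by
    have h2 : (2 * t - s) * k = k + (2 * t - 1 - s) * k := by
      have h3 : 2 * t - s = 1 + (2 * t - 1 - s) := by omega
      rw [h3, Nat.add_mul, one_mul]
    rw [h2]
    calc k + (2 * t - 1 - s) * k ≤ k + (SA \ SB).card * k := by
          have : 2 * t - 1 - s = (SA \ SB).card := by omega
          rw [this]
      _ ≤ k + b := by omega
      _ ≤ c * k := key
  have key3 : 2 * t - s ≤ c := Nat.le_of_mul_le_mul_right key2 hkpos
  have htc : t ≤ c := by omega
  refine ⟨by rw [hncard]; exact htc, ?_⟩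
  intro hcT
  rw [hncard] at hcT
  have hsT : s = t := by omega
  have hSBsub : SB ⊆ SA := by
    have h4 : SB ∩ SA = SB := by
      apply Finset.eq_of_subset_of_card_le Finset.inter_subset_left
      omega
    intro x hx
    rw [← h4] at hx
    exact (Finset.mem_inter.mp hx).2
  have htk : t * k = (t - 1) * k + k := by
    have h5 : t = (t - 1) + 1 := by omega
    rw [h5]
    simp [Nat.add_mul]
  have hbeq : b = (t - 1) * k := by
    have h6 : (t - 1) * k ≤ b := by
      have : 2 * t - 1 - s = t - 1 := by omega
      have h7 : (SA \ SB).card = t - 1 := by omega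
      rw [← h7]
      exact hbge
    have h8 : k + b ≤ t * k := by
      have : c * k = t * k := by rw [hcT]
      omega
    omega
  have htotal : ∑ θ ∈ SB, eigMult B θ = ∑ θ ∈ SB, (k + eigMult A θ) := by
    have h9 : ∑ θ ∈ SB, (k + eigMult A θ) = c * k + a := by
      rw [Finset.sum_add_distrib, Finset.sum_const, smul_eq_mul, hSBsum]
    rw [hsumB, h9, hcT]
    omega
  have hpt := (Finset.sum_eq_sum_iff_of_le (fun θ _ => hle θ)).mp htotal
  constructor
  · rw [← hSB, ← hSA]
    exact_mod_cast hSBsub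
  · intro θ hθ
    have hθ' : θ ∈ SB := by rw [← hSB] at hθ; exact_mod_cast hθ
    exact hpt θ hθ'

lemma offdiag_core {n t k : ℕ} (ht : 2 ≤ t) (hkt : t ≤ k)
    (A : Matrix (Fin n) (Fin n) ℝ) (hA : A.IsSymm)
    (μ : Fin (2 * t - 1) → ℝ) (hμ : StrictMono μ)
    (hspec : spectrum ℝ A = Set.range μ)
    (hge : ∀ i, k ≤ eigMult A (μ i))
    (B : Matrix (Fin (k + n)) (Fin (k + n)) ℝ) (hB : B.IsSymm)
    (hBA : ∀ i j, B (Fin.natAdd k i) (Fin.natAdd k j) = A i j)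
    (hcard : (spectrum ℝ B).ncard = t) :
    ∀ i j : Fin k, i ≠ j → B (Fin.castAdd n i) (Fin.castAdd n j) = 0 := by
  classical
  obtain ⟨-, hEq⟩ := bordering_count ht hkt A hA μ hμ hspec hge B hB hBA
  obtain ⟨hsub, hmul⟩ := hEq hcard
  have hA' := isHermitian_of_isSymm hA
  have hB' := isHermitian_of_isSymm hB
  have hAsym : ∀ z y, A z y = A y z := fun z y => (hA.apply y z).symm ▸ rfl
  have hBsym : ∀ x y, B x y = B y x := fun x y => (hB.apply y x).symm ▸ rfl
  set lam := hA'.eigenvalues with hlam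
  set SA := Finset.image lam Finset.univ with hSAdef
  set SB := Finset.image hB'.eigenvalues Finset.univ with hSBdef
  have hSA : (SA : Set ℝ) = spectrum ℝ A := by
    rw [spectrum_eq_range hA', hSAdef, Finset.coe_image, Finset.coe_univ, Set.image_univ]
  have hSB : (SB : Set ℝ) = spectrum ℝ B := by
    rw [spectrum_eq_range hB', hSBdef, Finset.coe_image, Finset.coe_univ, Set.image_univ]
  have hSBcard : SB.card = t := by rw [← Set.ncard_coe_finset, hSB, hcard]
  have hSBsubSA : SB ⊆ SA := by
    intro x hx
    have hx2 : x ∈ spectrum ℝ A := hsub (by rw [← hSB]; exact_mod_cast hx)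
    rw [← hSA] at hx2; exact_mod_cast hx2
  have hSAμ : SA = Finset.image μ Finset.univ := by
    apply Finset.coe_injective
    rw [hSA, hspec, Finset.coe_image, Finset.coe_univ, Set.image_univ]
  have hSAcard : SA.card = 2 * t - 1 := by
    rw [hSAμ, Finset.card_image_of_injective _ hμ.injective, Finset.card_univ, Fintype.card_fin]
  set SU := SA \ SB with hSUdef
  have hSUcard : SU.card = t - 1 := by
    rw [hSUdef, Finset.card_sdiff_of_subset hSBsubSA, hSBcard, hSAcard]
    omega
  -- eigenvector machinery
  set U := (hA'.eigenvectorUnitary : Matrix (Fin n) (Fin n) ℝ) with hUdef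
  set v : Fin n → (Fin n → ℝ) := fun i' c => U c i' with hvdef
  have hAv : ∀ i', A *ᵥ v i' = lam i' • v i' := by
    intro i'
    have h2 : v i' = ⇑(hA'.eigenvectorBasis i') := by
      funext c
      simp only [hvdef, hUdef, Matrix.IsHermitian.eigenvectorUnitary_apply]
    rw [h2]
    exact hA'.mulVec_eigenvectorBasis i'
  have hUU : U * star U = 1 := (Unitary.mem_iff.mp hA'.eigenvectorUnitary.2).2
  have hexp : ∀ w : Fin n → ℝ, ∀ c, w c = ∑ i', (∑ d, v i' d * w d) * v i' c := by
    intro w c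
    have h1 : (U * star U) *ᵥ w = w := by rw [hUU, Matrix.one_mulVec]
    have h2 := congrFun h1 c
    rw [← Matrix.mulVec_mulVec] at h2
    simp only [Matrix.mulVec, dotProduct, Matrix.star_apply, star_trivial] at h2
    rw [← h2]
    apply Finset.sum_congr rfl
    intro i' _
    simp only [hvdef]
    ring
  intro i j hij
  set g : Fin n → Fin k → ℝ := fun i' a => ∑ z, B (Fin.castAdd n a) (Fin.natAdd k z) * v i' z
    with hgdef
  have hkill : ∀ i', lam i' ∈ SB → ∀ a, g i' a = 0 := by
    intro i' hmem a
    have hθB : lam i' ∈ spectrum ℝ B := by rw [← hSB]; exact_mod_cast hmem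
    have heq := hmul _ hθB
    have hkey := ((bordering_key B A hBA (lam i')).2 heq).1
    have h3 := hkey (v i') (hAv i') a
    simpa only [hgdef] using h3
  set IU := Finset.univ.filter (fun i' : Fin n => lam i' ∉ SB) with hIUdef
  set hgrp : ℝ → ℝ := fun ν =>
    ∑ i' ∈ IU.filter (fun i' => lam i' = ν), g i' i * g i' j with hhdef
  have hmaps : ∀ i' ∈ IU, lam i' ∈ SU := by
    intro i' hi'
    rw [hSUdef, Finset.mem_sdiff]
    exact ⟨Finset.mem_image_of_mem lam (Finset.mem_univ i'), (Finset.mem_filter.mp hi').2⟩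
  -- main relation
  have hR : ∀ θ ∈ SB, B (Fin.castAdd n j) (Fin.castAdd n i)
      + ∑ ν ∈ SU, hgrp ν * (θ - ν)⁻¹ = 0 := by
    intro θ hθ
    have hθB : θ ∈ spectrum ℝ B := by rw [← hSB]; exact_mod_cast hθ
    have heq := hmul _ hθB
    obtain ⟨x, hxeig, hxtop⟩ := ((bordering_key B A hBA θ).2 heq).2 (Pi.single i 1)
    have hne : ∀ i' ∈ IU, θ - lam i' ≠ 0 := by
      intro i' hi' hzero
      rw [sub_eq_zero] at hzero
      exact (Finset.mem_filter.mp hi').2 (hzero ▸ hθ)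
    set c : Fin n → ℝ := fun i' => ∑ d, v i' d * x (Fin.natAdd k d) with hcdef
    have hrow : ∀ z, B (Fin.natAdd k z) (Fin.castAdd n i)
        + ∑ y, A z y * x (Fin.natAdd k y) = θ * x (Fin.natAdd k z) := by
      intro z
      have h0 := congrFun hxeig (Fin.natAdd k z)
      simp only [Matrix.mulVec, dotProduct, Pi.smul_apply, smul_eq_mul] at h0
      rw [Fin.sum_univ_add] at h0
      simp only [hxtop, hBA, Pi.single_apply, mul_ite, mul_one, mul_zero,
        Finset.sum_ite_eq', Finset.mem_univ, if_pos] at h0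
      exact h0
    have hstep1 : ∀ i', (θ - lam i') * c i' = g i' i := by
      intro i'
      have h1 : ∑ z, v i' z * (B (Fin.natAdd k z) (Fin.castAdd n i)
          + ∑ y, A z y * x (Fin.natAdd k y)) = ∑ z, v i' z * (θ * x (Fin.natAdd k z)) :=
        Finset.sum_congr rfl (fun z _ => by rw [hrow z])
      have hAzy : ∀ y, ∑ z, v i' z * (A z y * x (Fin.natAdd k y))
          = (lam i' * v i' y) * x (Fin.natAdd k y) := by
        intro y
        have hAv' := congrFun (hAv i') y
        simp only [Matrix.mulVec, dotProduct, Pi.smul_apply, smul_eq_mul] at hAv'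
        calc ∑ z, v i' z * (A z y * x (Fin.natAdd k y))
            = (∑ z, A y z * v i' z) * x (Fin.natAdd k y) := by
              rw [Finset.sum_mul]
              apply Finset.sum_congr rfl
              intro z _
              rw [hAsym z y]
              ring
          _ = (lam i' * v i' y) * x (Fin.natAdd k y) := by rw [hAv']
      have hterm2 : ∑ z, v i' z * (∑ y, A z y * x (Fin.natAdd k y)) = lam i' * c i' := by
        calc ∑ z, v i' z * (∑ y, A z y * x (Fin.natAdd k y))
            = ∑ z, ∑ y, v i' z * (A z y * x (Fin.natAdd k y)) := by
              apply Finset.sum_congr rfl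
              intro z _
              rw [Finset.mul_sum]
          _ = ∑ y, ∑ z, v i' z * (A z y * x (Fin.natAdd k y)) := Finset.sum_comm
          _ = ∑ y, (lam i' * v i' y) * x (Fin.natAdd k y) :=
              Finset.sum_congr rfl (fun y _ => hAzy y)
          _ = lam i' * c i' := by
              simp only [hcdef, Finset.mul_sum, mul_assoc]
      have hterm1 : ∑ z, v i' z * B (Fin.natAdd k z) (Fin.castAdd n i) = g i' i := by
        simp only [hgdef]
        apply Finset.sum_congr rfl
        intro z _
        rw [hBsym (Fin.natAdd k z) (Fin.castAdd n i)]
        ring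
      have hrhs : ∑ z, v i' z * (θ * x (Fin.natAdd k z)) = θ * c i' := by
        simp only [hcdef, Finset.mul_sum]
        apply Finset.sum_congr rfl
        intro z _
        ring
      simp only [mul_add, Finset.sum_add_distrib, hterm1, hterm2, hrhs] at h1
      nlinarith [h1]
    -- step 2
    have h2 := congrFun hxeig (Fin.castAdd n j)
    simp only [Matrix.mulVec, dotProduct, Pi.smul_apply, smul_eq_mul] at h2
    rw [Fin.sum_univ_add] at h2
    simp only [hxtop, Pi.single_apply, mul_ite, mul_one, mul_zero,
      Finset.sum_ite_eq', Finset.mem_univ, if_pos] at h2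
    rw [if_neg (Ne.symm hij)] at h2
    -- h2 : B (cast j) (cast i) + ∑ y, B (cast j) (nat y) * x (nat y) = 0
    have hw : ∑ y, B (Fin.castAdd n j) (Fin.natAdd k y) * x (Fin.natAdd k y)
        = ∑ i', c i' * g i' j := by
      calc ∑ y, B (Fin.castAdd n j) (Fin.natAdd k y) * x (Fin.natAdd k y)
          = ∑ y, B (Fin.castAdd n j) (Fin.natAdd k y) * (∑ i', c i' * v i' y) := by
            apply Finset.sum_congr rfl
            intro y _
            congr 1
            exact hexp (fun d => x (Fin.natAdd k d)) y
        _ = ∑ y, ∑ i', B (Fin.castAdd n j) (Fin.natAdd k y) * (c i' * v i' y) := by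
            apply Finset.sum_congr rfl
            intro y _
            rw [Finset.mul_sum]
        _ = ∑ i', ∑ y, B (Fin.castAdd n j) (Fin.natAdd k y) * (c i' * v i' y) :=
            Finset.sum_comm
        _ = ∑ i', c i' * g i' j := by
            apply Finset.sum_congr rfl
            intro i' _
            simp only [hgdef, Finset.mul_sum]
            apply Finset.sum_congr rfl
            intro y _
            ring
    rw [hw] at h2
    rw [← Finset.sum_filter_add_sum_filter_not Finset.univ (fun i' => lam i' ∈ SB)
      (fun i' => c i' * g i' j)] at h2
    have hz1 : ∑ i' ∈ Finset.univ.filter (fun i' => lam i' ∈ SB), c i' * g i' j = 0 := by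
      apply Finset.sum_eq_zero
      intro i' hi'
      rw [hkill i' (Finset.mem_filter.mp hi').2 j, mul_zero]
    rw [hz1, zero_add] at h2
    have hz2 : ∑ i' ∈ IU, c i' * g i' j
        = ∑ ν ∈ SU, hgrp ν * (θ - ν)⁻¹ := by
      rw [← Finset.sum_fiberwise_of_maps_to hmaps (fun i' => c i' * g i' j)]
      apply Finset.sum_congr rfl
      intro ν hν
      simp only [hhdef]
      rw [Finset.sum_mul]
      apply Finset.sum_congr rfl
      intro i' hi'
      obtain ⟨hi'IU, hlameq⟩ := Finset.mem_filter.mp hi'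
      have hci : c i' = g i' i * (θ - lam i')⁻¹ := by
        have hs := hstep1 i'
        field_simp [hne i' hi'IU] at hs ⊢
        linarith [hs]
      rw [hci, hlameq]
      ring
    rw [hz2] at h2
    exact h2
  -- polynomial argument
  set q : Polynomial ℝ := ∏ ν ∈ SU, (Polynomial.X - Polynomial.C ν) with hq
  set P : Polynomial ℝ := Polynomial.C (B (Fin.castAdd n j) (Fin.castAdd n i)) * q
      + ∑ ν ∈ SU, Polynomial.C (hgrp ν) * ∏ ν' ∈ SU.erase ν, (Polynomial.X - Polynomial.C ν')
      with hP
  have hqdeg : q.natDegree ≤ t - 1 := by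
    calc q.natDegree ≤ ∑ ν ∈ SU, (Polynomial.X - Polynomial.C ν).natDegree :=
        Polynomial.natDegree_prod_le _ _
      _ = ∑ _ν ∈ SU, 1 := Finset.sum_congr rfl (fun ν _ => Polynomial.natDegree_X_sub_C ν)
      _ = t - 1 := by rw [Finset.sum_const, smul_eq_mul, mul_one, hSUcard]
  have hPdeg : P.natDegree ≤ t - 1 := by
    rw [hP]
    apply le_trans (Polynomial.natDegree_add_le _ _)
    apply max_le
    · exact le_trans (Polynomial.natDegree_C_mul_le _ _) hqdeg
    · apply Polynomial.natDegree_sum_le_of_forall_le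
      intro ν hν
      apply le_trans (Polynomial.natDegree_C_mul_le _ _)
      calc (∏ ν' ∈ SU.erase ν, (Polynomial.X - Polynomial.C ν')).natDegree
          ≤ ∑ ν' ∈ SU.erase ν, (Polynomial.X - Polynomial.C ν').natDegree :=
            Polynomial.natDegree_prod_le _ _
        _ = (SU.erase ν).card := by
            rw [Finset.sum_congr rfl (fun ν' _ => Polynomial.natDegree_X_sub_C ν'),
              Finset.sum_const, smul_eq_mul, mul_one]
        _ ≤ t - 1 := by
            rw [Finset.card_erase_of_mem hν, hSUcard]
            omega
  have hPeval : ∀ θ ∈ SB, P.eval θ = 0 := by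
    intro θ hθ
    have hth : ∀ ν ∈ SU, θ - ν ≠ 0 := by
      intro ν hν hzero
      rw [sub_eq_zero] at hzero
      exact (Finset.mem_sdiff.mp hν).2 (hzero ▸ hθ)
    have heval : P.eval θ = (∏ ν ∈ SU, (θ - ν)) *
        (B (Fin.castAdd n j) (Fin.castAdd n i) + ∑ ν ∈ SU, hgrp ν * (θ - ν)⁻¹) := by
      rw [hP, hq]
      simp only [Polynomial.eval_add, Polynomial.eval_mul, Polynomial.eval_C,
        Polynomial.eval_prod, Polynomial.eval_finset_sum, Polynomial.eval_sub,
        Polynomial.eval_X]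
      rw [mul_add]
      congr 1
      · ring
      · rw [Finset.mul_sum]
        apply Finset.sum_congr rfl
        intro ν hν
        rw [← Finset.mul_prod_erase SU (fun ν' => θ - ν') hν]
        have hcancel : (θ - ν) * (hgrp ν * (θ - ν)⁻¹) = hgrp ν := by
          rw [mul_comm (hgrp ν), ← mul_assoc, mul_inv_cancel₀ (hth ν hν), one_mul]
        rw [mul_comm (θ - ν) (∏ ν' ∈ SU.erase ν, (θ - ν')), mul_assoc, hcancel, mul_comm]
    rw [heval, hR θ hθ, mul_zero]
  have hP0 : P = 0 := by
    apply Polynomial.eq_zero_of_natDegree_lt_card_of_eval_eq_zero' P SB hPeval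
    rw [hSBcard]
    omega
  have hhzero : ∀ ν ∈ SU, hgrp ν = 0 := by
    intro ν hν
    have h0 := congrArg (Polynomial.eval ν) hP0
    rw [hP, hq] at h0
    simp only [Polynomial.eval_add, Polynomial.eval_mul, Polynomial.eval_C,
      Polynomial.eval_prod, Polynomial.eval_finset_sum, Polynomial.eval_sub,
      Polynomial.eval_X, Polynomial.eval_zero] at h0
    rw [Finset.prod_eq_zero hν (by ring), mul_zero, zero_add] at h0
    rw [Finset.sum_eq_single_of_mem ν hν] at h0
    · have hprodne : ∏ ν' ∈ SU.erase ν, (ν - ν') ≠ 0 := by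
        apply Finset.prod_ne_zero_iff.mpr
        intro ν' hν'
        have := (Finset.mem_erase.mp hν').1
        intro hzero
        rw [sub_eq_zero] at hzero
        exact this (hzero.symm)
      rcases mul_eq_zero.mp h0 with h | h
      · exact h
      · exact absurd h hprodne
    · intro ν' hν' hne'
      rw [Finset.prod_eq_zero (Finset.mem_erase.mpr ⟨hne'.symm, hν⟩) (by ring), mul_zero]
  -- finish
  obtain ⟨θ₀, hθ₀⟩ : SB.Nonempty := by
    rw [← Finset.card_pos, hSBcard]
    omega
  have hfin := hR θ₀ hθ₀
  rw [Finset.sum_eq_zero (fun ν hν => by rw [hhzero ν hν, zero_mul]), add_zero] at hfin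
  rw [hBsym (Fin.castAdd n i) (Fin.castAdd n j)]
  exact hfin


lemma cval_eq {t k : ℕ} (ht : 2 ≤ t) (hkt : t ≤ k) (m' : Fin (2 * t - 1) → ℕ)
    (hge : ∀ i, k ≤ m' i) (hodd : ∀ i : Fin (2 * t - 1), i.val % 2 = 1 → m' i = k) :
    Cval (2 * t - 1) t m' = k := by
  have hp0lt : ∀ i : Fin t, 2 * i.val < 2 * t - 1 := fun i => by have := i.isLt; omega
  set p0 : Fin t → Fin (2 * t - 1) := fun i => ⟨2 * i.val, hp0lt i⟩ with hp0
  have hterm : ∀ i : Fin t, ∀ h : i.val + 1 < t,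
      Finset.Ioo (p0 i) (p0 ⟨i.val + 1, h⟩)
        = {(⟨2 * i.val + 1, by have := i.isLt; omega⟩ : Fin (2 * t - 1))} := by
    intro i h
    ext j
    simp only [Finset.mem_Ioo, Finset.mem_singleton, Fin.lt_def, Fin.ext_iff, hp0]
    omega
  have hsup : Finset.univ.sup (fun i : Fin t =>
      if h : i.val + 1 < t then ∑ j ∈ Finset.Ioo (p0 i) (p0 ⟨i.val + 1, h⟩), m' j else 0)
      = k := by
    apply le_antisymm
    · apply Finset.sup_le
      intro i _
      by_cases h : i.val + 1 < t
      · rw [dif_pos h, hterm i h, Finset.sum_singleton]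
        rw [hodd _ (by show (2 * i.val + 1) % 2 = 1; omega)]
      · rw [dif_neg h]
        exact Nat.zero_le k
    · have h0t : ((⟨0, by omega⟩ : Fin t)).val + 1 < t := by show 0 + 1 < t; omega
      have hle := Finset.le_sup (f := fun i : Fin t =>
        if h : i.val + 1 < t then ∑ j ∈ Finset.Ioo (p0 i) (p0 ⟨i.val + 1, h⟩), m' j else 0)
        (Finset.mem_univ (⟨0, by omega⟩ : Fin t))
      simp only [] at hle
      rw [dif_pos h0t, hterm _ h0t, Finset.sum_singleton] at hle
      refine le_trans (le_of_eq ?_) hle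
      exact (hodd _ (by show (2 * (0:ℕ) + 1) % 2 = 1; norm_num)).symm
  have hmem : k ∈ { r : ℕ | ∃ p : Fin t → Fin (2 * t - 1), Monotone p ∧
      (∀ i : Fin t, (i.val = 0 → (p i).val = 0) ∧ (i.val = t - 1 → (p i).val = 2 * t - 1 - 1)) ∧
      r = Finset.univ.sup (fun i : Fin t =>
        if h : i.val + 1 < t then
          ∑ j ∈ Finset.Ioo (p i) (p ⟨i.val + 1, h⟩), m' j
        else 0) } := by
    refine ⟨p0, ?_, ?_, hsup.symm⟩
    · intro a b hab
      have hab' : a.val ≤ b.val := hab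
      show (2 * a.val : ℕ) ≤ 2 * b.val
      omega
    · intro i
      constructor
      · intro h0
        show 2 * i.val = 0
        omega
      · intro h1
        show 2 * i.val = 2 * t - 1 - 1
        omega
  have hlb : ∀ r ∈ { r : ℕ | ∃ p : Fin t → Fin (2 * t - 1), Monotone p ∧
      (∀ i : Fin t, (i.val = 0 → (p i).val = 0) ∧ (i.val = t - 1 → (p i).val = 2 * t - 1 - 1)) ∧
      r = Finset.univ.sup (fun i : Fin t =>
        if h : i.val + 1 < t then
          ∑ j ∈ Finset.Ioo (p i) (p ⟨i.val + 1, h⟩), m' j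
        else 0) }, k ≤ r := by
    rintro r ⟨p, hmono, hbound, rfl⟩
    have hgap : ∃ i : Fin t, ∃ h : i.val + 1 < t, (p i).val + 2 ≤ (p ⟨i.val + 1, h⟩).val := by
      by_contra hcon
      push_neg at hcon
      have hub : ∀ i : ℕ, ∀ hi : i < t, (p ⟨i, hi⟩).val ≤ i := by
        intro i
        induction i with
        | zero => intro hi; rw [(hbound ⟨0, hi⟩).1 rfl]
        | succ i ih =>
          intro hi
          have hi' : i < t := by omega
          have h1 := ih hi'
          have h2 : (p ⟨i + 1, hi⟩).val < (p ⟨i, hi'⟩).val + 2 := hcon ⟨i, hi'⟩ hi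
          omega
      have hlast := (hbound ⟨t - 1, by omega⟩).2 rfl
      have := hub (t - 1) (by omega)
      omega
    obtain ⟨i₀, h, hgap⟩ := hgap
    have hjlt : (p i₀).val + 1 < 2 * t - 1 := by
      have := (p ⟨i₀.val + 1, h⟩).isLt
      omega
    have hjmem : (⟨(p i₀).val + 1, hjlt⟩ : Fin (2 * t - 1))
        ∈ Finset.Ioo (p i₀) (p ⟨i₀.val + 1, h⟩) := by
      rw [Finset.mem_Ioo]
      constructor
      · rw [Fin.lt_def]
        show (p i₀).val < (p i₀).val + 1
        omega
      · rw [Fin.lt_def]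
        show (p i₀).val + 1 < (p ⟨i₀.val + 1, h⟩).val
        omega
    calc k ≤ m' ⟨(p i₀).val + 1, hjlt⟩ := hge _
      _ ≤ ∑ j ∈ Finset.Ioo (p i₀) (p ⟨i₀.val + 1, h⟩), m' j :=
        Finset.single_le_sum (fun _ _ => Nat.zero_le _) hjmem
      _ ≤ _ := by
        have hle := Finset.le_sup (f := fun i : Fin t =>
          if h : i.val + 1 < t then
            ∑ j ∈ Finset.Ioo (p i) (p ⟨i.val + 1, h⟩), m' j
          else 0) (Finset.mem_univ i₀)
        rw [dif_pos h] at hle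
        exact hle
  exact le_antisymm (Nat.sInf_le hmem) (le_csInf ⟨k, hmem⟩ hlb)


/-- Suppose `t ≥ 2`, `k ≥ t` and the symmetric matrix `A` has `2t - 1` distinct
eigenvalues `μ 0 < μ 1 < ⋯` with ordered multiplicity list
`(m 0, k, m 1, k, …, k, m (t-1))` where each `m i ≥ k`.  Then `C(m(A), t) = k`; every
symmetric `k`-bordering `B` of `A` with exactly `t` distinct eigenvalues has all
off-diagonal entries of its leading `k × k` principal block equal to zero; in particular,
for every non-empty graph `G` on `k` vertices, every matrix of `S(G ∨ G(A))` whose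
trailing block is `A` has more than `t` distinct eigenvalues, i.e. `q(G ∨ A) > t`. -/
theorem stmt19 {n t k : ℕ} (ht : 2 ≤ t) (hkt : t ≤ k)
    (A : Matrix (Fin n) (Fin n) ℝ) (hA : A.IsSymm)
    (μ : Fin (2 * t - 1) → ℝ) (hμ : StrictMono μ)
    (hspec : spectrum ℝ A = Set.range μ)
    (m : Fin t → ℕ) (hm : ∀ i, k ≤ m i)
    (hmult : ∀ i : Fin (2 * t - 1),
      eigMult A (μ i) =
        if i.val % 2 = 0 then m ⟨i.val / 2, by have := i.isLt; omega⟩ else k) :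
    Cval (2 * t - 1) t (fun i => eigMult A (μ i)) = k ∧
    (∀ B : Matrix (Fin (k + n)) (Fin (k + n)) ℝ, B.IsSymm →
      (∀ i j : Fin n, B (Fin.natAdd k i) (Fin.natAdd k j) = A i j) →
      (spectrum ℝ B).ncard = t →
      ∀ i j : Fin k, i ≠ j → B (Fin.castAdd n i) (Fin.castAdd n j) = 0) ∧
    (∀ G : SimpleGraph (Fin k), G ≠ ⊥ →
      ∀ B : Matrix (Fin (k + n)) (Fin (k + n)) ℝ, B.IsSymm →
        (∀ i j : Fin n, B (Fin.natAdd k i) (Fin.natAdd k j) = A i j) →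
        (∀ i j : Fin k, i ≠ j →
          (B (Fin.castAdd n i) (Fin.castAdd n j) ≠ 0 ↔ G.Adj i j)) →
        (∀ (i : Fin k) (j : Fin n), B (Fin.castAdd n i) (Fin.natAdd k j) ≠ 0) →
        t < (spectrum ℝ B).ncard) := by
  have hge : ∀ i, k ≤ eigMult A (μ i) := by
    intro i
    rw [hmult i]
    split_ifs with h
    · exact hm _
    · exact le_refl k
  refine ⟨?_, ?_, ?_⟩
  · have hodd : ∀ i : Fin (2 * t - 1), i.val % 2 = 1 → eigMult A (μ i) = k := by
      intro i hi
      rw [hmult i, if_neg (by omega)]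
    exact cval_eq ht hkt _ hge hodd
  · intro B hB hBA hcard
    exact offdiag_core ht hkt A hA μ hμ hspec hge B hB hBA hcard
  · intro G hG B hB hBA hoff _hcross
    have hle := (bordering_count ht hkt A hA μ hμ hspec hge B hB hBA).1
    rcases lt_or_eq_of_le hle with hlt | heq
    · exact hlt
    · exfalso
      obtain ⟨a, b, hadj⟩ : ∃ a b, G.Adj a b := by
        by_contra hno
        push_neg at hno
        apply hG
        ext a b
        simp only [SimpleGraph.bot_adj, iff_false]
        exact hno a b
      have hz := offdiag_core ht hkt A hA μ hμ hspec hge B hB hBA heq.symm a b hadj.ne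
      exact ((hoff a b hadj.ne).mpr hadj) hz
end
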